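/- arXiv:1608.01761 — 9 statements merged into one kernel-verified Lean document; each statement's English description precedes it below -/
import Mathlib

section
/- Let λ be a nonnegative integer, θ a real number with sin θ ≠ 0, and t a real number with |t| < 1. Then the complex number e^{iλθ}/((1 − e^{−2iθ})(1 − t·e^{2iθ})) + e^{−iλθ}/((1 − e^{2iθ})(1 − t·e^{−2iθ})) is real and equals Θ_λ(θ). (This identifies the SU(2) specialization of the general deformed character with its trigonometric form.) -/
/-!
Put `z = e^{iθ}` and `u = e^{iλθ}`. Since `1 - z^{∓2} = ±z^{∓1}(z - z⁻¹)`, the two summands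
have the common denominator `(z - z⁻¹)(1 - t z²)(1 - t z⁻²)`, and the numerator collapses to
`(uz - (uz)⁻¹) - t(uz⁻¹ - (uz⁻¹)⁻¹)`. Each difference `w - w⁻¹` of unimodular numbers is `2i`
times a sine, and `(1 - t z²)(1 - t z⁻²) = 1 - 2t cos 2θ + t²`, so after cancelling `2i` one is
left with `Θ_λ(θ)`.
-/

/-- The SU(2) deformed character of weight `l` at parameter `t` and angle `θ`:
`Θ_λ(θ) = (sin((λ+1)θ) − t·sin((λ−1)θ)) / (sin θ · (1 − 2t·cos(2θ) + t²))`,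
where `λ − 1` is interpreted as an integer. -/
noncomputable def Theta (t θ : ℝ) (l : ℕ) : ℝ :=
  (Real.sin (((l : ℝ) + 1) * θ) - t * Real.sin ((((l : ℤ) - 1 : ℤ) : ℝ) * θ)) /
    (Real.sin θ * (1 - 2 * t * Real.cos (2 * θ) + t ^ 2))

open Complex

theorem weyl_partial_fractions {K : Type*} [Field K] {z u t : K} (hz : z ≠ 0)
    (hz_sub_inv : z - z⁻¹ ≠ 0) (ht : t * z ^ 2 ≠ 1) (ht' : t * z⁻¹ ^ 2 ≠ 1) :
    u / ((1 - z⁻¹ ^ 2) * (1 - t * z ^ 2)) + u⁻¹ / ((1 - z ^ 2) * (1 - t * z⁻¹ ^ 2)) =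
      ((u * z - (u * z)⁻¹) - t * (u * z⁻¹ - (u * z⁻¹)⁻¹)) /
        ((z - z⁻¹) * (1 - t * (z ^ 2 + z⁻¹ ^ 2) + t ^ 2)) := by
  have h_sq : 1 - z ^ 2 ≠ 0 := by
    rw [show 1 - z ^ 2 = -z * (z - z⁻¹) by field_simp; ring]
    exact mul_ne_zero (neg_ne_zero.mpr hz) hz_sub_inv
  have h_inv_sq : 1 - z⁻¹ ^ 2 ≠ 0 := by
    rw [show 1 - z⁻¹ ^ 2 = z⁻¹ * (z - z⁻¹) by field_simp]
    exact mul_ne_zero (inv_ne_zero hz) hz_sub_inv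
  have ht_sq : 1 - t * z ^ 2 ≠ 0 := sub_ne_zero.mpr (Ne.symm ht)
  have ht_inv_sq : 1 - t * z⁻¹ ^ 2 ≠ 0 := sub_ne_zero.mpr (Ne.symm ht')
  have hdenom : 1 - t * (z ^ 2 + z⁻¹ ^ 2) + t ^ 2 = (1 - t * z ^ 2) * (1 - t * z⁻¹ ^ 2) := by
    field_simp
    ring
  rw [hdenom, div_add_div _ _ (mul_ne_zero h_inv_sq ht_sq) (mul_ne_zero h_sq ht_inv_sq),
    div_eq_div_iff (mul_ne_zero (mul_ne_zero h_inv_sq ht_sq) (mul_ne_zero h_sq ht_inv_sq))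
      (mul_ne_zero hz_sub_inv (mul_ne_zero ht_sq ht_inv_sq))]
  field_simp
  ring

theorem ofReal_mul_ne_one_of_norm_eq_one {w : ℂ} (hw : ‖w‖ = 1) {t : ℝ} (ht : |t| < 1) :
    (t : ℂ) * w ≠ 1 := by
  intro h
  have := congrArg norm h
  rw [norm_mul, hw, Complex.norm_real, Real.norm_eq_abs, mul_one, norm_one] at this
  exact ht.ne this

theorem two_I_mul_sin_ofReal (x : ℝ) :
    2 * I * (Real.sin x : ℂ) = exp (x * I) - (exp (x * I))⁻¹ := by
  rw [← exp_neg, ofReal_sin, mul_right_comm, two_sin]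
  ring_nf
  rw [I_sq]
  ring

theorem two_cos_ofReal (x : ℝ) :
    2 * (Real.cos x : ℂ) = exp (x * I) + (exp (x * I))⁻¹ := by
  rw [← exp_neg, ofReal_cos, two_cos, neg_mul]

theorem Theta_eq_div_two_I (t θ : ℝ) (l : ℕ) :
    (Theta t θ l : ℂ) =
      (2 * I * Real.sin ((l + 1) * θ) - t * (2 * I * Real.sin ((l - 1) * θ))) /
        (2 * I * Real.sin θ * (1 - t * (2 * Real.cos (2 * θ)) + t ^ 2)) := by
  rw [Theta, ofReal_div, ← mul_div_mul_left _ _ (mul_ne_zero two_ne_zero I_ne_zero)]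
  push_cast
  ring

/-- The SU(2) specialization of the general deformed character agrees with its
trigonometric form: for `λ ∈ ℕ`, `sin θ ≠ 0` and `|t| < 1`,
`e^{iλθ}/((1 − e^{−2iθ})(1 − t e^{2iθ})) + e^{−iλθ}/((1 − e^{2iθ})(1 − t e^{−2iθ}))`
is real and equals `Θ_λ(θ)`. -/
theorem deformed_character_complex_form (l : ℕ) (θ t : ℝ)
    (hθ : Real.sin θ ≠ 0) (ht : |t| < 1) :
    Complex.exp (Complex.I * (l : ℂ) * (θ : ℂ)) /
        ((1 - Complex.exp (-2 * Complex.I * (θ : ℂ))) *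
          (1 - (t : ℂ) * Complex.exp (2 * Complex.I * (θ : ℂ))))
      + Complex.exp (-Complex.I * (l : ℂ) * (θ : ℂ)) /
        ((1 - Complex.exp (2 * Complex.I * (θ : ℂ))) *
          (1 - (t : ℂ) * Complex.exp (-2 * Complex.I * (θ : ℂ))))
    = (Theta t θ l : ℂ) := by
  set z := exp (θ * I)
  set u := exp ((l * θ : ℝ) * I)
  have hz : ‖z‖ = 1 := norm_exp_ofReal_mul_I θ
  have hz_sub_inv : z - z⁻¹ = 2 * I * Real.sin θ := (two_I_mul_sin_ofReal θ).symm
  have hu : exp (I * l * θ) = u := by congr 1; push_cast; ring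
  have hu_neg : exp (-I * l * θ) = u⁻¹ := by rw [← hu, ← exp_neg]; congr 1; ring
  have hz_sq : exp (2 * I * θ) = z ^ 2 := by rw [← exp_nat_mul]; congr 1; push_cast; ring
  have hz_neg_sq : exp (-2 * I * θ) = z⁻¹ ^ 2 := by
    rw [inv_pow, ← hz_sq, ← exp_neg]; congr 1; ring
  have hu_succ : exp (((l + 1) * θ : ℝ) * I) = u * z := by
    rw [← exp_add]; congr 1; push_cast; ring
  have hu_pred : exp (((l - 1) * θ : ℝ) * I) = u * z⁻¹ := by
    rw [← exp_neg, ← exp_add]; congr 1; push_cast; ring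
  have hz_sq' : exp ((2 * θ : ℝ) * I) = z ^ 2 := by rw [← hz_sq]; congr 1; push_cast; ring
  calc _ = u / ((1 - z⁻¹ ^ 2) * (1 - t * z ^ 2)) +
        u⁻¹ / ((1 - z ^ 2) * (1 - t * z⁻¹ ^ 2)) := by
        rw [hu, hu_neg, hz_sq, hz_neg_sq]
    _ = ((u * z - (u * z)⁻¹) - t * (u * z⁻¹ - (u * z⁻¹)⁻¹)) /
        ((z - z⁻¹) * (1 - t * (z ^ 2 + z⁻¹ ^ 2) + t ^ 2)) :=
      weyl_partial_fractions (exp_ne_zero _)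
        (by rw [hz_sub_inv]
            exact mul_ne_zero (mul_ne_zero two_ne_zero I_ne_zero) (ofReal_ne_zero.mpr hθ))
        (ofReal_mul_ne_one_of_norm_eq_one (by rw [norm_pow, hz, one_pow]) ht)
        (ofReal_mul_ne_one_of_norm_eq_one (by rw [norm_pow, norm_inv, hz, inv_one, one_pow]) ht)
    _ = Theta t θ l := by
      rw [Theta_eq_div_two_I, two_I_mul_sin_ofReal, two_I_mul_sin_ofReal, two_cos_ofReal,
        ← hz_sub_inv, hu_succ, hu_pred, hz_sq', inv_pow]
end

section
/- Let λ1, λ2 be nonnegative integers, θ a real number with sin θ ≠ 0, and t a real number with |t| < 1. Then Θ_{λ1}(θ)·Θ_{λ2}(θ) = ( cos((λ1−λ2)θ) − Re( e^{i(λ1+λ2+2)θ}·(1 − t·e^{−2iθ})/(1 − t·e^{2iθ}) ) ) / ( 2·sin²θ·(1 − 2t·cos(2θ) + t²) ). -/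
open Complex ComplexConjugate

lemma Complex.im_mul_im (a b : ℂ) : a.im * b.im = ((a * conj b).re - (a * b).re) / 2 := by
  simp only [mul_re, conj_re, conj_im]
  ring

lemma Complex.normSq_mul_div (p q : ℂ) : (normSq p : ℂ) * (q / p) = conj p * q := by
  rcases eq_or_ne p 0 with rfl | hp
  · simp
  · rw [← mul_conj]
    field_simp

section DeformedCharacter

variable (t θ : ℝ)

lemma conj_one_sub_mul_exp :
    conj (1 - (t : ℂ) * exp (2 * I * θ)) = 1 - (t : ℂ) * exp (-2 * I * θ) := by
  rw [map_sub, map_one, map_mul, conj_ofReal, ← exp_conj]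
  simp only [map_mul, conj_I, conj_ofReal, map_ofNat]
  ring_nf

lemma normSq_one_sub_mul_exp :
    normSq (1 - (t : ℂ) * exp (2 * I * θ)) = 1 - 2 * t * Real.cos (2 * θ) + t ^ 2 := by
  have h : 2 * I * θ = ((2 * θ : ℝ) : ℂ) * I := by push_cast; ring
  rw [h, normSq_apply]
  simp only [sub_re, sub_im, one_re, one_im, mul_re, mul_im, ofReal_re, ofReal_im,
    exp_ofReal_mul_I_re, exp_ofReal_mul_I_im]
  linear_combination t ^ 2 * Real.sin_sq_add_cos_sq (2 * θ)

lemma sin_sub_mul_sin_eq_im (x : ℝ) :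
    Real.sin x - t * Real.sin (x - 2 * θ) =
      (exp (x * I) * (1 - (t : ℂ) * exp (-2 * I * θ))).im := by
  have h : exp (x * I) * (1 - (t : ℂ) * exp (-2 * I * θ)) =
      exp (x * I) - t * exp (((x - 2 * θ : ℝ) : ℂ) * I) := by
    push_cast
    rw [mul_sub, mul_one, mul_left_comm, ← exp_add]
    ring_nf
  rw [h, sub_im, im_ofReal_mul, exp_ofReal_mul_I_im, exp_ofReal_mul_I_im]

lemma sin_sub_mul_sin_mul_sin_sub_mul_sin (x y : ℝ) :
    (Real.sin x - t * Real.sin (x - 2 * θ)) * (Real.sin y - t * Real.sin (y - 2 * θ)) =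
      (1 - 2 * t * Real.cos (2 * θ) + t ^ 2) * (Real.cos (x - y) -
        (exp ((x + y : ℝ) * I) * (1 - (t : ℂ) * exp (-2 * I * θ)) /
          (1 - (t : ℂ) * exp (2 * I * θ))).re) / 2 := by
  set p := 1 - (t : ℂ) * exp (2 * I * θ)
  have hq : 1 - (t : ℂ) * exp (-2 * I * θ) = conj p := (conj_one_sub_mul_exp t θ).symm
  have hcross : exp (x * I) * conj p * conj (exp (y * I) * conj p) =
      (normSq p : ℂ) * exp ((x - y : ℝ) * I) := by
    rw [map_mul, conj_conj, ← exp_conj, normSq_eq_conj_mul_self]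
    simp only [map_mul, conj_ofReal, conj_I]
    rw [mul_mul_mul_comm, ← exp_add, mul_comm (conj p)]
    push_cast
    ring_nf
  have hdiag : exp (x * I) * conj p * (exp (y * I) * conj p) =
      (normSq p : ℂ) * (exp ((x + y : ℝ) * I) * conj p / p) := by
    rw [normSq_mul_div]
    push_cast
    rw [add_mul, exp_add]
    ring
  rw [sin_sub_mul_sin_eq_im, sin_sub_mul_sin_eq_im, hq, im_mul_im, hcross, hdiag,
    re_ofReal_mul, re_ofReal_mul, exp_ofReal_mul_I_re, normSq_one_sub_mul_exp]
  ring

end DeformedCharacter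

lemma Theta_eq_div (t θ : ℝ) (l : ℕ) :
    Theta t θ l = (Real.sin ((l + 1) * θ) - t * Real.sin ((l + 1) * θ - 2 * θ)) /
      (Real.sin θ * (1 - 2 * t * Real.cos (2 * θ) + t ^ 2)) := by
  rw [Theta]
  push_cast
  ring_nf

theorem deformed_character_product_general (l1 l2 : ℕ) (θ t : ℝ) :
    Theta t θ l1 * Theta t θ l2 =
      (Real.cos ((((l1 : ℤ) - (l2 : ℤ) : ℤ) : ℝ) * θ) -
          (Complex.exp (Complex.I * ((l1 : ℂ) + (l2 : ℂ) + 2) * (θ : ℂ)) *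
              (1 - (t : ℂ) * Complex.exp (-2 * Complex.I * (θ : ℂ))) /
              (1 - (t : ℂ) * Complex.exp (2 * Complex.I * (θ : ℂ)))).re) /
        (2 * Real.sin θ ^ 2 * (1 - 2 * t * Real.cos (2 * θ) + t ^ 2)) := by
  have hcos : (((l1 : ℤ) - (l2 : ℤ) : ℤ) : ℝ) * θ = (l1 + 1) * θ - (l2 + 1) * θ := by
    push_cast; ring
  have hexp : I * ((l1 : ℂ) + (l2 : ℂ) + 2) * (θ : ℂ) =
      (((l1 + 1) * θ + (l2 + 1) * θ : ℝ) : ℂ) * I := by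
    push_cast; ring
  rw [Theta_eq_div, Theta_eq_div, div_mul_div_comm, sin_sub_mul_sin_mul_sin_sub_mul_sin, hcos, hexp]
  rcases eq_or_ne (1 - 2 * t * Real.cos (2 * θ) + t ^ 2) 0 with hD | hD
  · simp [hD]
  · field_simp

/-- Product formula for two SU(2) deformed characters:
`Θ_{λ1}(θ)·Θ_{λ2}(θ) = (cos((λ1−λ2)θ) − Re(e^{i(λ1+λ2+2)θ}(1 − t e^{−2iθ})/(1 − t e^{2iθ})))
  / (2 sin²θ (1 − 2t cos(2θ) + t²))`. -/
theorem deformed_character_product (l1 l2 : ℕ) (θ t : ℝ)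
    (hθ : Real.sin θ ≠ 0) (ht : |t| < 1) :
    Theta t θ l1 * Theta t θ l2 =
      (Real.cos ((((l1 : ℤ) - (l2 : ℤ) : ℤ) : ℝ) * θ) -
          (Complex.exp (Complex.I * ((l1 : ℂ) + (l2 : ℂ) + 2) * (θ : ℂ)) *
              (1 - (t : ℂ) * Complex.exp (-2 * Complex.I * (θ : ℂ))) /
              (1 - (t : ℂ) * Complex.exp (2 * Complex.I * (θ : ℂ)))).re) /
        (2 * Real.sin θ ^ 2 * (1 - 2 * t * Real.cos (2 * θ) + t ^ 2)) :=
  deformed_character_product_general l1 l2 θ t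
end

section
/- Let k be a positive integer, let δ be an integer with 0 ≤ δ ≤ k−1 and k−1−δ even, let θ ∈ (0, π), and let t be a real number with |t| < 1. Assume θ satisfies the SU(2) Bethe ansatz equation at level k. Then ∑_{j=0}^{(k−1−δ)/2} t^j · ( sin((δ+2j+1)θ) − t·sin((δ+2j−1)θ) ) = Im( e^{i(δ+1)θ}·(1 − t·e^{−2iθ})/(1 − t·e^{2iθ}) ), where δ+2j−1 is interpreted as an integer (so sin((δ+2j−1)θ) = −sin θ when δ+2j = 0). (This is the evaluation of the sum W in the proof of the SU(2) fusion identity; the Bethe equation forces the tail term of the geometric series to be real.) -/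
/-!
Put `z = e^{iθ}`, `u = 1 - t z²` and `v = 1 - t z⁻²`. The `j`-th summand is the imaginary part of
`z^{δ+1} v (t z²)^j`, so the sum is the imaginary part of a geometric sum, which equals
`z^{δ+1} v / u - t^{m+1} w` with `k = δ + 1 + 2m` and `w = z^{k+2} v / u`. The Bethe equation says
precisely `w² = 1`, so `w = ±1` and the tail term `t^{m+1} w` is real.
-/

open Complex Finset

theorem sum_pow_mul_zpow_sub_eq {K : Type*} [Field K] {z t : K} (hz : z ≠ 0)
    (hu : 1 - t * z ^ (2 : ℤ) ≠ 0) (a : ℤ) (n : ℕ) :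
    ∑ j ∈ range n, t ^ j * (z ^ (a + 2 * j + 1) - t * z ^ (a + 2 * j - 1)) =
      (z ^ (a + 1) - t ^ n * z ^ (a + 1 + 2 * n)) * (1 - t * z ^ (-2 : ℤ)) /
        (1 - t * z ^ (2 : ℤ)) := by
  have hpow : ∀ b : ℤ, ∀ j : ℕ, z ^ (b + 2 * j) = z ^ b * (z ^ (2 : ℤ)) ^ j := fun b j => by
    rw [← zpow_natCast, ← zpow_mul, ← zpow_add₀ hz]
  have hterm : ∀ j : ℕ, t ^ j * (z ^ (a + 2 * j + 1) - t * z ^ (a + 2 * j - 1)) =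
      z ^ (a + 1) * (1 - t * z ^ (-2 : ℤ)) * (t * z ^ (2 : ℤ)) ^ j := fun j => by
    rw [show a + 2 * j + 1 = a + 1 + 2 * j by ring, show a + 2 * j - 1 = a + 1 + 2 * j + -2 by ring,
      zpow_add₀ hz _ (-2), hpow]
    ring
  rw [eq_div_iff hu, sum_congr rfl fun j _ => hterm j, ← mul_sum, mul_assoc, geom_sum_mul_neg,
    hpow]
  ring

theorem Complex.im_ofReal_mul_eq_zero_of_sq_eq_one (r : ℝ) {w : ℂ} (hw : w ^ 2 = 1) :
    ((r : ℂ) * w).im = 0 := by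
  rcases sq_eq_one_iff.1 hw with rfl | rfl <;> simp

theorem Complex.exp_mul_I_zpow (θ : ℝ) (n : ℤ) : cexp (θ * I) ^ n = cexp ((n * θ : ℝ) * I) := by
  rw [← exp_int_mul]; push_cast; ring_nf

theorem Complex.exp_mul_I_zpow_im (θ : ℝ) (n : ℤ) : (cexp (θ * I) ^ n).im = Real.sin (n * θ) := by
  rw [exp_mul_I_zpow, exp_ofReal_mul_I_im]

theorem one_sub_ofReal_mul_exp_mul_I_zpow_ne_zero {t : ℝ} (ht : |t| < 1) (θ : ℝ) (n : ℤ) :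
    1 - (t : ℂ) * cexp (θ * I) ^ n ≠ 0 := by
  refine sub_ne_zero.2 fun h => ?_
  have := congrArg norm h
  rw [norm_one, norm_mul, norm_zpow, norm_exp_ofReal_mul_I, one_zpow, mul_one, norm_real,
    Real.norm_eq_abs] at this
  linarith

theorem fusion_sum_W_general (k : ℕ) (hk : 0 < k) (δ : ℕ) (hδ : δ ≤ k - 1)
    (heven : Even (k - 1 - δ)) (θ : ℝ)
    (t : ℝ) (ht : |t| < 1)
    (hBethe : Complex.exp (2 * Complex.I * ((k : ℂ) + 2) * (θ : ℂ)) *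
        (1 - (t : ℂ) * Complex.exp (-2 * Complex.I * (θ : ℂ))) ^ 2 =
        (1 - (t : ℂ) * Complex.exp (2 * Complex.I * (θ : ℂ))) ^ 2) :
    ∑ j ∈ Finset.range ((k - 1 - δ) / 2 + 1),
      t ^ j * (Real.sin ((((δ : ℤ) + 2 * (j : ℤ) + 1 : ℤ) : ℝ) * θ) -
        t * Real.sin ((((δ : ℤ) + 2 * (j : ℤ) - 1 : ℤ) : ℝ) * θ))
    = (Complex.exp (Complex.I * ((δ : ℂ) + 1) * (θ : ℂ)) *
        (1 - (t : ℂ) * Complex.exp (-2 * Complex.I * (θ : ℂ))) /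
        (1 - (t : ℂ) * Complex.exp (2 * Complex.I * (θ : ℂ)))).im := by
  obtain ⟨m, hm⟩ := heven
  rw [show (k - 1 - δ) / 2 = m by omega]
  set z := cexp (θ * I)
  have hexp : ∀ (n : ℤ) (w : ℂ), w = n * θ * I → cexp w = z ^ n := fun n w hw => by
    rw [← exp_int_mul, hw, mul_assoc]
  rw [hexp (2 * (k + 2)) _ (by push_cast; ring), hexp (-2) _ (by push_cast; ring),
    hexp 2 _ (by push_cast; ring)] at hBethe
  rw [hexp (δ + 1) _ (by push_cast; ring), hexp (-2) _ (by push_cast; ring),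
    hexp 2 _ (by push_cast; ring)]
  have hu := one_sub_ofReal_mul_exp_mul_I_zpow_ne_zero ht θ 2
  have hsum := sum_pow_mul_zpow_sub_eq (exp_ne_zero _) hu δ (m + 1)
  rw [show (δ + 1 + 2 * (m + 1 : ℕ) : ℤ) = k + 2 by omega] at hsum
  set u := 1 - (t : ℂ) * z ^ (2 : ℤ)
  set v := 1 - (t : ℂ) * z ^ (-2 : ℤ)
  have htail : (z ^ (k + 2 : ℤ) * v / u) ^ 2 = 1 := by
    rw [div_pow, div_eq_one_iff_eq (pow_ne_zero 2 hu), ← hBethe, mul_pow, ← zpow_natCast,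
      ← zpow_mul]
    ring_nf
  have hsplit : ∑ j ∈ range (m + 1),
      (t : ℂ) ^ j * (z ^ (δ + 2 * j + 1 : ℤ) - t * z ^ (δ + 2 * j - 1 : ℤ)) =
        z ^ (δ + 1 : ℤ) * v / u - ((t ^ (m + 1) : ℝ) : ℂ) * (z ^ (k + 2 : ℤ) * v / u) := by
    rw [hsum]
    push_cast
    ring
  rw [← sub_zero (_ : ℂ).im, ← im_ofReal_mul_eq_zero_of_sq_eq_one (t ^ (m + 1)) htail, ← sub_im,
    ← hsplit, im_sum]
  refine sum_congr rfl fun j _ => ?_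
  rw [← ofReal_pow, im_ofReal_mul, sub_im, im_ofReal_mul, exp_mul_I_zpow_im, exp_mul_I_zpow_im]

/-- Evaluation of the tail sum `W` in the proof of the SU(2) fusion identity.
Let `k > 0`, `0 ≤ δ ≤ k−1` with `k−1−δ` even, `θ ∈ (0, π)`, `|t| < 1`, and assume
the SU(2) Bethe ansatz equation at level `k`:
`e^{2i(k+2)θ}(1 − t e^{−2iθ})² = (1 − t e^{2iθ})²`. Then
`∑_{j=0}^{(k−1−δ)/2} t^j (sin((δ+2j+1)θ) − t sin((δ+2j−1)θ))
  = Im(e^{i(δ+1)θ}(1 − t e^{−2iθ})/(1 − t e^{2iθ}))`,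
where `δ+2j−1` is interpreted as an integer. -/
theorem fusion_sum_W (k : ℕ) (hk : 0 < k) (δ : ℕ) (hδ : δ ≤ k - 1)
    (heven : Even (k - 1 - δ)) (θ : ℝ) (hθ : θ ∈ Set.Ioo 0 Real.pi)
    (t : ℝ) (ht : |t| < 1)
    (hBethe : Complex.exp (2 * Complex.I * ((k : ℂ) + 2) * (θ : ℂ)) *
        (1 - (t : ℂ) * Complex.exp (-2 * Complex.I * (θ : ℂ))) ^ 2 =
        (1 - (t : ℂ) * Complex.exp (2 * Complex.I * (θ : ℂ))) ^ 2) :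
    ∑ j ∈ Finset.range ((k - 1 - δ) / 2 + 1),
      t ^ j * (Real.sin ((((δ : ℤ) + 2 * (j : ℤ) + 1 : ℤ) : ℝ) * θ) -
        t * Real.sin ((((δ : ℤ) + 2 * (j : ℤ) - 1 : ℤ) : ℝ) * θ))
    = (Complex.exp (Complex.I * ((δ : ℂ) + 1) * (θ : ℂ)) *
        (1 - (t : ℂ) * Complex.exp (-2 * Complex.I * (θ : ℂ))) /
        (1 - (t : ℂ) * Complex.exp (2 * Complex.I * (θ : ℂ)))).im :=
  fusion_sum_W_general k hk δ hδ heven θ t ht hBethe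
end

section
/- Let k ≥ 2 be an integer and t any real number. Then for all integers λ1, λ2 with 0 ≤ λ1, λ2 ≤ k: f^{λ1λ2 0} − t·f^{λ1λ2 2} equals 1 − t² if λ1 = λ2 ∈ {0, k}, equals 1 − t if λ1 = λ2 ∉ {0, k}, and equals 0 if λ1 ≠ λ2. (This verifies that contracting the fusion coefficients with the cap state w_∅ = w_0 − t·w_2 reproduces the TQFT metric η^{λ1λ2} = diag(1−t², 1−t, …, 1−t, 1−t²).) -/
/-- `Δλ = max(d0, d1, d2, d3)` where `d0 = λ1+λ2+λ3−2k`, `d1 = λ1−λ2−λ3`,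
`d2 = λ2−λ3−λ1`, `d3 = λ3−λ1−λ2`. -/
def deltaLam (k l1 l2 l3 : ℕ) : ℤ :=
  max (max ((l1 : ℤ) + l2 + l3 - 2 * k) ((l1 : ℤ) - l2 - l3))
    (max ((l2 : ℤ) - l3 - l1) ((l3 : ℤ) - l1 - l2))

/-- The level-`k` SU(2) fusion coefficient `f^{λ1λ2λ3}`: `0` if `λ1+λ2+λ3` is odd,
`1` if it is even and `Δλ ≤ 0`, and `t^{Δλ/2}` if it is even and `Δλ > 0`. -/
noncomputable def fus (k : ℕ) (t : ℝ) (l1 l2 l3 : ℕ) : ℝ :=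
  if (l1 + l2 + l3) % 2 = 1 then 0
  else if deltaLam k l1 l2 l3 ≤ 0 then 1
  else t ^ (deltaLam k l1 l2 l3 / 2).toNat

/-- Contracting the SU(2) fusion coefficients with the cap state `w_∅ = w_0 − t·w_2`
reproduces the TQFT metric `η^{λ1λ2} = diag(1−t², 1−t, …, 1−t, 1−t²)`: for `k ≥ 2`,
`f^{λ1λ2 0} − t f^{λ1λ2 2}` equals `1−t²` if `λ1 = λ2 ∈ {0,k}`, `1−t` if
`λ1 = λ2 ∉ {0,k}`, and `0` otherwise. -/
theorem cap_state_metric (k : ℕ) (hk : 2 ≤ k) (t : ℝ)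
    (l1 l2 : ℕ) (h1 : l1 ≤ k) (h2 : l2 ≤ k) :
    fus k t l1 l2 0 - t * fus k t l1 l2 2 =
      if l1 = l2 then (if l1 = 0 ∨ l1 = k then 1 - t ^ 2 else 1 - t) else 0 := by
  by_cases hodd : (l1 + l2) % 2 = 1
  · have hne : l1 ≠ l2 := by omega
    simp only [fus]
    rw [if_pos (by omega : (l1 + l2 + 0) % 2 = 1),
      if_pos (by omega : (l1 + l2 + 2) % 2 = 1), if_neg hne]
    ring
  · by_cases heq : l1 = l2
    · subst heq
      have h0 : fus k t l1 l1 0 = 1 := by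
        simp only [fus]
        rw [if_neg (by omega), if_pos (by unfold deltaLam; omega)]
      by_cases hb : l1 = 0 ∨ l1 = k
      · have hD2 : deltaLam k l1 l1 2 = 2 := by unfold deltaLam; omega
        have h2v : fus k t l1 l1 2 = t := by
          simp only [fus, hD2]
          rw [if_neg (by omega), if_neg (by norm_num)]
          norm_num
        rw [h0, h2v, if_pos rfl, if_pos hb]; ring
      · have hD2 : deltaLam k l1 l1 2 ≤ 0 := by unfold deltaLam; omega
        have h2v : fus k t l1 l1 2 = 1 := by
          simp only [fus]
          rw [if_neg (by omega), if_pos hD2]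
        rw [h0, h2v, if_pos rfl, if_neg hb]; ring
    · have hD : deltaLam k l1 l2 0 = deltaLam k l1 l2 2 + 2 ∧
          0 ≤ deltaLam k l1 l2 2 := by
        unfold deltaLam; omega
      have h0 : fus k t l1 l2 0 = t ^ ((deltaLam k l1 l2 0) / 2).toNat := by
        simp only [fus]
        rw [if_neg (by omega), if_neg (by omega)]
      have h2v : fus k t l1 l2 2 = t ^ ((deltaLam k l1 l2 2) / 2).toNat := by
        simp only [fus]
        rw [if_neg (by omega)]
        by_cases hz : deltaLam k l1 l2 2 ≤ 0
        · rw [if_pos hz]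
          have hz0 : ((deltaLam k l1 l2 2) / 2).toNat = 0 := by omega
          rw [hz0, pow_zero]
        · rw [if_neg hz]
      have he : ((deltaLam k l1 l2 0) / 2).toNat =
          ((deltaLam k l1 l2 2) / 2).toNat + 1 := by omega
      rw [h0, h2v, if_neg heq, he, pow_succ]; ring
end

section
/- Let k be a positive integer, t a real number with t ∉ {0, 1, −1}, and λ1, λ2, λ3, λ4 integers with 0 ≤ λi ≤ k and λ1+λ2 ≡ λ3+λ4 (mod 2). With δ1 = |λ1−λ2|, δ2 = min(λ1+λ2, 2k−λ1−λ2), δ3 = |λ3−λ4|, δ4 = min(λ3+λ4, 2k−λ3−λ4), L1 = min(δ1,δ3), L2 = max(δ1,δ3), L3 = min(δ2,δ4), L4 = max(δ2,δ4), assume L2 ≤ L3. Then ∑_{ν=0}^{k} f^{λ1λ2ν} · f^{λ3λ4ν} · d_ν = ((L3−L2)/2 + 1)/(1−t) + 2t/(1−t)² + ( t^{(L1+L2)/2} + t^{(L2−L1)/2} + t^{k−(L3+L4)/2} + t^{(L4−L3)/2} ) / ( (1 − t^{−1})(1 − t²) ). -/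
/-- The cylinder normalization `d_ν`: `1/(1−t²)` if `ν ∈ {0, k}`, else `1/(1−t)`. -/
noncomputable def dcoef (k : ℕ) (t : ℝ) (ν : ℕ) : ℝ :=
  if ν = 0 ∨ ν = k then 1 / (1 - t ^ 2) else 1 / (1 - t)

lemma fus_eq_zero_of_odd {k l1 l2 ν : ℕ} (t : ℝ) (h : (l1 + l2 + ν) % 2 = 1) :
    fus k t l1 l2 ν = 0 := if_pos h

lemma fus_eq_pow_of_even {k l1 l2 ν : ℕ} (t : ℝ) (h1 : l1 ≤ k) (h2 : l2 ≤ k)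
    (h : (l1 + l2 + ν) % 2 = 0) :
    fus k t l1 l2 ν =
      t ^ ((((l1 : ℤ) - l2).natAbs / 2 - ν / 2) +
        (ν / 2 - min (l1 + l2) (2 * k - l1 - l2) / 2)) := by
  unfold fus deltaLam
  rw [if_neg (by omega)]
  split_ifs with hΔ
  · simp only [max_le_iff] at hΔ
    rw [← pow_zero t]
    congr 1
    omega
  · congr 1
    omega

lemma natAbs_sub_min_add_parity_and_le {k l1 l2 p : ℕ} (hp : (l1 + l2) % 2 = p) (h1 : l1 ≤ k)
    (h2 : l2 ≤ k) :
    ((l1 : ℤ) - l2).natAbs % 2 = p ∧ min (l1 + l2) (2 * k - l1 - l2) % 2 = p ∧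
      ((l1 : ℤ) - l2).natAbs ≤ min (l1 + l2) (2 * k - l1 - l2) ∧
        min (l1 + l2) (2 * k - l1 - l2) ≤ k := by
  omega

lemma tsub_add_tsub_add_eq_min_max (a b c d j : ℕ) :
    (a - j) + (j - b) + ((c - j) + (j - d)) =
      (min a c - j) + (max a c - j) + (j - min b d) + (j - max b d) := by
  omega

lemma sum_range_eq_sum_range_of_parity {M : Type*} [AddCommMonoid M] {k p : ℕ} (hp : p ≤ 1)
    (hpk : p ≤ k) (g : ℕ → M) (hg : ∀ ν, ν % 2 ≠ p → g ν = 0) :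
    ∑ ν ∈ Finset.range (k + 1), g ν = ∑ j ∈ Finset.range ((k - p) / 2 + 1), g (p + 2 * j) := by
  rw [← Finset.sum_image (g := fun j => p + 2 * j) (by intro a _ b _ h; simp only at h; omega)]
  refine (Finset.sum_subset ?_ ?_).symm
  · intro ν hν
    simp only [Finset.mem_image, Finset.mem_range] at hν ⊢
    omega
  · intro ν hν hνp
    refine hg ν fun hpar => hνp ?_
    simp only [Finset.mem_image, Finset.mem_range] at hν ⊢
    exact ⟨(ν - p) / 2, by omega, by omega⟩

def tailSum {R : Type*} [Semiring R] (t : R) (a b : ℕ) : R :=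
  ∑ j ∈ Finset.range b, t ^ ((a - j) + (b - j))

lemma tailSum_eq {K : Type*} [Field K] {t : K} (ht1 : t ≠ 1) (ht2 : t ^ 2 ≠ 1) {a b : ℕ}
    (hab : a ≤ b) :
    tailSum t a b =
      t * (t ^ (b - a) - 1) / (t - 1) + t ^ (b - a) * t ^ 2 * (t ^ (2 * a) - 1) / (t ^ 2 - 1) := by
  have hlow : ∑ j ∈ Finset.range a, t ^ ((a - j) + (b - j)) =
      t ^ (b - a) * t ^ 2 * (t ^ (2 * a) - 1) / (t ^ 2 - 1) := by
    rw [← Finset.sum_range_reflect]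
    have hterm : ∀ i ∈ Finset.range a,
        t ^ ((a - (a - 1 - i)) + (b - (a - 1 - i))) = t ^ (b - a) * t ^ 2 * (t ^ 2) ^ i := by
      intro i hi
      rw [Finset.mem_range] at hi
      rw [← pow_mul, ← pow_add, ← pow_add]
      congr 1
      omega
    rw [Finset.sum_congr rfl hterm, ← Finset.mul_sum, geom_sum_eq ht2, ← pow_mul, mul_div_assoc]
  have hhigh : ∑ j ∈ Finset.Ico a b, t ^ ((a - j) + (b - j)) = t * (t ^ (b - a) - 1) / (t - 1) := by
    rw [Finset.sum_Ico_eq_sum_range, ← Finset.sum_range_reflect]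
    have hterm : ∀ i ∈ Finset.range (b - a),
        t ^ ((a - (a + (b - a - 1 - i))) + (b - (a + (b - a - 1 - i)))) = t * t ^ i := by
      intro i hi
      rw [Finset.mem_range] at hi
      rw [← pow_succ']
      congr 1
      omega
    rw [Finset.sum_congr rfl hterm, ← Finset.mul_sum, geom_sum_eq ht1, mul_div_assoc]
  rw [tailSum, ← Finset.sum_range_add_sum_Ico _ hab, hlow, hhigh, add_comm]

lemma sum_range_pow_eq_tailSum_add_tailSum {R : Type*} [Semiring R] (t : R)
    {N m1 m2 m3 m4 : ℕ} (h12 : m1 ≤ m2) (h23 : m2 ≤ m3) (h34 : m3 ≤ m4)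
    (h3N : m3 ≤ N) :
    ∑ j ∈ Finset.range (N + 1), t ^ ((m1 - j) + (m2 - j) + (j - m3) + (j - m4)) =
      tailSum t m1 m2 + ((m3 - m2 : ℕ) + 1 : R) + tailSum t (N - m4) (N - m3) := by
  rw [← Finset.sum_range_add_sum_Ico _ (show m2 ≤ N + 1 by omega),
    ← Finset.sum_Ico_consecutive _ (show m2 ≤ m3 + 1 by omega) (show m3 + 1 ≤ N + 1 by omega),
    ← add_assoc]
  congr 1
  congr 1
  · refine Finset.sum_congr rfl fun j hj => ?_
    rw [Finset.mem_range] at hj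
    congr 1
    omega
  · rw [Finset.sum_congr rfl fun j hj => ?_, Finset.sum_const, Nat.card_Ico, nsmul_one]
    · push_cast [show m3 + 1 - m2 = m3 - m2 + 1 by omega]
      rfl
    · rw [Finset.mem_Ico] at hj
      rw [show (m1 - j) + (m2 - j) + (j - m3) + (j - m4) = 0 by omega, pow_zero]
  · rw [Finset.sum_Ico_eq_sum_range, tailSum, ← Finset.sum_range_reflect]
    refine Finset.sum_congr (by congr 1; omega) fun i hi => ?_
    rw [Finset.mem_range] at hi
    congr 1
    omega

lemma tailSum_div_sub_eq {K : Type*} [Field K] {t : K} (ht0 : t ≠ 0) (ht1 : t ≠ 1) (ht2 : t ≠ -1)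
    {a b q : ℕ} (hq : q ≤ 1) (hab : a ≤ b) :
    tailSum t a b / (1 - t) - t / (1 - t ^ 2) * (if q = 0 then t ^ (a + b) else 0) =
      t / (1 - t) ^ 2 + (t ^ (a + b + q) + t ^ (b - a)) / ((1 - t⁻¹) * (1 - t ^ 2)) := by
  have hsq : t ^ 2 ≠ 1 := sq_ne_one_iff.mpr ⟨ht1, ht2⟩
  have h1 : 1 - t ≠ 0 := sub_ne_zero.mpr ht1.symm
  have h1' : t - 1 ≠ 0 := sub_ne_zero.mpr ht1
  have h2 : 1 - t ^ 2 ≠ 0 := sub_ne_zero.mpr hsq.symm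
  have h2' : t ^ 2 - 1 ≠ 0 := sub_ne_zero.mpr hsq
  have hinv : 1 - t⁻¹ ≠ 0 := sub_ne_zero.mpr (by simpa [eq_comm] using ht1)
  rw [tailSum_eq ht1 hsq hab, show a + b = (b - a) + 2 * a by omega]
  interval_cases q
  · simp only [if_true, add_zero]
    field_simp
    ring
  · simp only [one_ne_zero, if_false, mul_zero, sub_zero, pow_succ]
    field_simp
    ring

lemma sum_mul_dcoef {k p q N : ℕ} (hk : k ≠ 0) {t : ℝ} (ht : t ≠ -1) (hkN : k = p + 2 * N + q)
    (g : ℕ → ℝ) :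
    ∑ j ∈ Finset.range (N + 1), g j * dcoef k t (p + 2 * j) =
      (∑ j ∈ Finset.range (N + 1), g j) / (1 - t) -
        t / (1 - t ^ 2) * ((if p = 0 then g 0 else 0) + (if q = 0 then g N else 0)) := by
  have hdcoef : ∀ ν, dcoef k t ν =
      1 / (1 - t) - t / (1 - t ^ 2) * ((if ν = 0 then 1 else 0) + (if ν = k then 1 else 0)) := by
    intro ν
    unfold dcoef
    rcases eq_or_ne t 1 with rfl | ht1
    · norm_num -- both sides are built from `1 / 0 = 0`
    have h1 : 1 - t ≠ 0 := sub_ne_zero.mpr ht1.symm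
    have h2 : 1 - t ^ 2 ≠ 0 := sub_ne_zero.mpr (sq_ne_one_iff.mpr ⟨ht1, ht⟩).symm
    split_ifs <;> first | omega | (field_simp; ring)
  have hfirst : ∑ j ∈ Finset.range (N + 1), (if p + 2 * j = 0 then g j else 0) =
      if p = 0 then g 0 else 0 := by
    rw [Finset.sum_eq_single 0 (fun j _ hj => if_neg (by omega)) (by simp)]
    simp
  have hlast : ∑ j ∈ Finset.range (N + 1), (if p + 2 * j = k then g j else 0) =
      if q = 0 then g N else 0 := by
    rw [Finset.sum_eq_single N (fun j hj hjN => if_neg (by rw [Finset.mem_range] at hj; omega))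
      (by simp)]
    simp only [show p + 2 * N = k ↔ q = 0 by omega]
  have hterm : ∀ j, g j * dcoef k t (p + 2 * j) = g j / (1 - t) - t / (1 - t ^ 2) *
      ((if p + 2 * j = 0 then g j else 0) + (if p + 2 * j = k then g j else 0)) := by
    intro j
    rw [hdcoef]
    split_ifs <;> ring
  rw [Finset.sum_congr rfl fun j _ => hterm j, Finset.sum_sub_distrib, ← Finset.sum_div,
    ← Finset.mul_sum, Finset.sum_add_distrib, hfirst, hlast]

lemma sum_pow_mul_dcoef {k p q N m1 m2 m3 m4 : ℕ} (hk : k ≠ 0) {t : ℝ} (ht0 : t ≠ 0)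
    (ht1 : t ≠ 1) (ht2 : t ≠ -1) (hp : p ≤ 1) (hq : q ≤ 1) (hkN : k = p + 2 * N + q)
    (h12 : m1 ≤ m2) (h23 : m2 ≤ m3) (h34 : m3 ≤ m4) (h4N : m4 ≤ N) :
    ∑ j ∈ Finset.range (N + 1),
        t ^ ((m1 - j) + (m2 - j) + (j - m3) + (j - m4)) * dcoef k t (p + 2 * j) =
      ((m3 - m2 : ℕ) + 1 : ℝ) / (1 - t) + 2 * t / (1 - t) ^ 2 +
        (t ^ (m1 + m2 + p) + t ^ (m2 - m1) + t ^ ((N - m4) + (N - m3) + q) + t ^ (m4 - m3)) /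
          ((1 - t⁻¹) * (1 - t ^ 2)) := by
  have hleft := tailSum_div_sub_eq ht0 ht1 ht2 hp h12
  have hright := tailSum_div_sub_eq ht0 ht1 ht2 hq (show N - m4 ≤ N - m3 by omega)
  rw [show N - m3 - (N - m4) = m4 - m3 by omega] at hright
  rw [sum_mul_dcoef hk ht2 hkN, sum_range_pow_eq_tailSum_add_tailSum t h12 h23 h34 (by omega),
    show m1 - 0 + (m2 - 0) + (0 - m3) + (0 - m4) = m1 + m2 by omega,
    show m1 - N + (m2 - N) + (N - m3) + (N - m4) = (N - m4) + (N - m3) by omega]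
  linear_combination hleft + hright

lemma sum_pow_mul_dcoef_of_le {k p L1 L2 L3 L4 : ℕ} (hk : k ≠ 0) {t : ℝ} (ht0 : t ≠ 0)
    (ht1 : t ≠ 1) (ht2 : t ≠ -1) (hp : p ≤ 1)
    (hL1 : L1 % 2 = p) (hL2 : L2 % 2 = p) (hL3 : L3 % 2 = p) (hL4 : L4 % 2 = p)
    (h12 : L1 ≤ L2) (h23 : L2 ≤ L3) (h34 : L3 ≤ L4) (h4k : L4 ≤ k) :
    ∑ j ∈ Finset.range ((k - p) / 2 + 1),
        t ^ ((L1 / 2 - j) + (L2 / 2 - j) + (j - L3 / 2) + (j - L4 / 2)) * dcoef k t (p + 2 * j) =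
      (((L3 - L2) / 2 : ℕ) + 1 : ℝ) / (1 - t) + 2 * t / (1 - t) ^ 2 +
        (t ^ ((L1 + L2) / 2) + t ^ ((L2 - L1) / 2) + t ^ (k - (L3 + L4) / 2) +
            t ^ ((L4 - L3) / 2)) / ((1 - t⁻¹) * (1 - t ^ 2)) := by
  rw [show (L3 - L2) / 2 = L3 / 2 - L2 / 2 by omega,
    show (L1 + L2) / 2 = L1 / 2 + L2 / 2 + p by omega,
    show (L2 - L1) / 2 = L2 / 2 - L1 / 2 by omega, show (L4 - L3) / 2 = L4 / 2 - L3 / 2 by omega,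
    show k - (L3 + L4) / 2 = ((k - p) / 2 - L4 / 2) + ((k - p) / 2 - L3 / 2) + (k - p) % 2 by omega]
  exact sum_pow_mul_dcoef hk ht0 ht1 ht2 hp (by omega) (by omega) (by omega) (by omega) (by omega)
    (by omega)

/-- Closed form of the four-punctured-sphere partition function
`d_{0,4} = ∑_ν f^{λ1λ2ν} f^{λ3λ4ν} d_ν` in the case `L2 ≤ L3` (nonempty
parabolic moduli space):
`d_{0,4} = ((L3−L2)/2 + 1)/(1−t) + 2t/(1−t)²
  + (t^{(L1+L2)/2} + t^{(L2−L1)/2} + t^{k−(L3+L4)/2} + t^{(L4−L3)/2})/((1−t⁻¹)(1−t²))`. -/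
theorem four_point_function_L2_le_L3 (k : ℕ) (hk : 0 < k) (t : ℝ)
    (ht0 : t ≠ 0) (ht1 : t ≠ 1) (ht2 : t ≠ -1)
    (l1 l2 l3 l4 : ℕ) (h1 : l1 ≤ k) (h2 : l2 ≤ k) (h3 : l3 ≤ k) (h4 : l4 ≤ k)
    (hpar : (l1 + l2) % 2 = (l3 + l4) % 2)
    (δ1 δ2 δ3 δ4 L1 L2 L3 L4 : ℕ)
    (hδ1 : δ1 = ((l1 : ℤ) - l2).natAbs)
    (hδ2 : δ2 = min (l1 + l2) (2 * k - l1 - l2))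
    (hδ3 : δ3 = ((l3 : ℤ) - l4).natAbs)
    (hδ4 : δ4 = min (l3 + l4) (2 * k - l3 - l4))
    (hL1 : L1 = min δ1 δ3) (hL2 : L2 = max δ1 δ3)
    (hL3 : L3 = min δ2 δ4) (hL4 : L4 = max δ2 δ4)
    (hL : L2 ≤ L3) :
    ∑ ν ∈ Finset.range (k + 1), fus k t l1 l2 ν * fus k t l3 l4 ν * dcoef k t ν =
      (((L3 - L2) / 2 : ℕ) + 1 : ℝ) / (1 - t) + 2 * t / (1 - t) ^ 2 +
        (t ^ ((L1 + L2) / 2) + t ^ ((L2 - L1) / 2) + t ^ (k - (L3 + L4) / 2) +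
            t ^ ((L4 - L3) / 2)) / ((1 - t⁻¹) * (1 - t ^ 2)) := by
  obtain ⟨p, hp⟩ : ∃ p, (l1 + l2) % 2 = p := ⟨_, rfl⟩
  have hp1 : p ≤ 1 := hp ▸ Nat.le_of_lt_succ (Nat.mod_lt _ two_pos)
  obtain ⟨hδ1p, hδ2p, hδ12, hδ2k⟩ := hδ1 ▸ hδ2 ▸ natAbs_sub_min_add_parity_and_le hp h1 h2
  obtain ⟨hδ3p, hδ4p, hδ34, hδ4k⟩ :=
    hδ3 ▸ hδ4 ▸ natAbs_sub_min_add_parity_and_le (hpar ▸ hp) h3 h4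
  have hhalf : Monotone (· / 2 : ℕ → ℕ) := fun _ _ h => Nat.div_le_div_right h
  have hfus : ∀ j, fus k t l1 l2 (p + 2 * j) * fus k t l3 l4 (p + 2 * j) =
      t ^ ((L1 / 2 - j) + (L2 / 2 - j) + (j - L3 / 2) + (j - L4 / 2)) := by
    intro j
    rw [fus_eq_pow_of_even t h1 h2 (by omega), fus_eq_pow_of_even t h3 h4 (by omega), ← hδ1, ← hδ2,
      ← hδ3, ← hδ4, ← pow_add, show (p + 2 * j) / 2 = j by omega, tsub_add_tsub_add_eq_min_max,
      hL1, hL2, hL3, hL4, hhalf.map_min, hhalf.map_max, hhalf.map_min, hhalf.map_max]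
  rw [sum_range_eq_sum_range_of_parity hp1 (by omega) _ fun ν hν => by
      rw [fus_eq_zero_of_odd t (by omega), zero_mul, zero_mul]]
  simp only [hfus]
  subst hL1 hL2 hL3 hL4
  have hparity (a b : ℕ) (ha : a % 2 = p) (hb : b % 2 = p) : min a b % 2 = p ∧ max a b % 2 = p :=
    ⟨min_rec' (· % 2 = p) ha hb, max_rec' (· % 2 = p) ha hb⟩
  exact sum_pow_mul_dcoef_of_le hk.ne' ht0 ht1 ht2 hp1 (hparity _ _ hδ1p hδ3p).1
    (hparity _ _ hδ1p hδ3p).2 (hparity _ _ hδ2p hδ4p).1 (hparity _ _ hδ2p hδ4p).2 min_le_max hL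
    min_le_max (max_le hδ2k hδ4k)
end

section
/- Let k be a positive integer, t a real number with t ∉ {0, 1, −1}, and λ1, λ2, λ3, λ4 integers with 0 ≤ λi ≤ k and λ1+λ2 ≡ λ3+λ4 (mod 2). With δ1 = |λ1−λ2|, δ2 = min(λ1+λ2, 2k−λ1−λ2), δ3 = |λ3−λ4|, δ4 = min(λ3+λ4, 2k−λ3−λ4), L1 = min(δ1,δ3), L2 = max(δ1,δ3), L3 = min(δ2,δ4), L4 = max(δ2,δ4), assume L3 ≤ L2. Then ∑_{ν=0}^{k} f^{λ1λ2ν} · f^{λ3λ4ν} · d_ν = t^{(L2−L3)/2}·( ((L2−L3)/2 + 1)/(1−t) + 2t/(1−t)² ) + ( t^{(L1+L2)/2} + t^{(L2−L1)/2} + t^{k−(L3+L4)/2} + t^{(L4−L3)/2} ) / ( (1 − t^{−1})(1 − t²) ). -/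
private lemma geom1 (t : ℝ) (ht : t ≠ 1) (c n : ℕ) :
    ∑ j ∈ Finset.range n, t ^ (c + j) = t ^ c * ((t ^ n - 1) / (t - 1)) := by
  rw [Finset.sum_congr rfl fun j _ => pow_add t c j, ← Finset.mul_sum, geom_sum_eq ht]

private lemma geom2 (t : ℝ) (ht : t ^ 2 ≠ 1) (c n : ℕ) :
    ∑ j ∈ Finset.range n, t ^ (c + 2 * j) = t ^ c * (((t ^ 2) ^ n - 1) / (t ^ 2 - 1)) := by
  rw [Finset.sum_congr rfl fun j _ => by rw [pow_add, pow_mul], ← Finset.mul_sum,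
    geom_sum_eq ht]

set_option maxHeartbeats 2000000 in
private lemma fus_eq (k : ℕ) (t : ℝ) (l1 l2 ν d1 d2 : ℕ) (h1 : l1 ≤ k) (h2 : l2 ≤ k)
    (hd1 : d1 = ((l1 : ℤ) - l2).natAbs) (hd2 : d2 = min (l1 + l2) (2 * k - l1 - l2)) :
    fus k t l1 l2 ν =
      if (l1 + l2 + ν) % 2 = 1 then 0 else t ^ (max (d1 - ν) (ν - d2) / 2) := by
  unfold fus deltaLam
  split_ifs with hpar hle
  · rfl
  · rw [show max (d1 - ν) (ν - d2) / 2 = 0 from by omega, pow_zero]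
  · congr 1
    omega

set_option maxHeartbeats 1000000 in
private lemma sort_exp (a b c d ν : ℕ) (h1 : a ≤ b) (h2 : c ≤ d)
    (hBC : min b d ≤ max a c) :
    max (a - ν) (ν - b) + max (c - ν) (ν - d)
      = max (min a c - ν) (ν - min b d) + max (max a c - ν) (ν - max b d) := by
  omega

private lemma half_add (x y u v : ℕ) (h : x + y = u + v) (hx : x % 2 = 0) (hy : y % 2 = 0)
    (hu : u % 2 = 0) : x / 2 + y / 2 = u / 2 + v / 2 := by omega

private lemma half_two (x y u v : ℕ) (hx : x = 2 * u) (hy : y = 2 * v) :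
    x / 2 + y / 2 = u + v := by omega

private lemma reindex (p N k : ℕ) (hp : p ≤ 1) (hk : p + 2 * N ≤ k) (hk2 : k ≤ p + 2 * N + 1)
    (F : ℕ → ℝ) (hF : ∀ ν, ν % 2 ≠ p % 2 → F ν = 0) :
    ∑ ν ∈ Finset.range (k + 1), F ν = ∑ i ∈ Finset.range (N + 1), F (p + 2 * i) := by
  have himg : ∑ x ∈ (Finset.range (N + 1)).image (fun i => p + 2 * i), F x
      = ∑ i ∈ Finset.range (N + 1), F (p + 2 * i) :=
    Finset.sum_image (fun x _ y _ h => by omega)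
  rw [← himg]
  refine (Finset.sum_subset ?_ ?_).symm
  · intro x hx
    simp only [Finset.mem_image, Finset.mem_range] at hx ⊢
    obtain ⟨i, hi, rfl⟩ := hx; omega
  · intro x hx hx2
    have hx' := Finset.mem_range.mp hx
    apply hF
    intro h
    rw [Finset.mem_image] at hx2
    exact hx2 ⟨(x - p) / 2, Finset.mem_range.mpr (by omega), by omega⟩

set_option maxHeartbeats 2000000 in
private lemma key (t : ℝ) (ht0 : t ≠ 0) (ht1 : t ≠ 1) (ht2 : t ≠ -1)
    (p α m1 m2 m3 m4 extra k : ℕ) (hp : p ≤ 1) (he : extra ≤ 1)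
    (hk : k = p + 2 * (α + m1 + m2 + m3 + m4) + extra) (hk0 : 0 < k) :
    ∑ i ∈ Finset.range (α + m1 + m2 + m3 + m4 + 1),
        t ^ (max (α - i) (i - (α + m1)) + max ((α + m1 + m2) - i) (i - (α + m1 + m2 + m3)))
          * dcoef k t (p + 2 * i)
      = t ^ m2 * (((m2 : ℝ) + 1) / (1 - t) + 2 * t / (1 - t) ^ 2) +
        (t ^ (p + 2 * α + m1 + m2) + t ^ (m1 + m2) + t ^ (m2 + m3 + 2 * m4 + extra) +
            t ^ (m2 + m3)) / ((1 - t⁻¹) * (1 - t ^ 2)) := by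
  have h2 : t ^ 2 ≠ 1 := by
    intro h
    have h' : (t - 1) * (t + 1) = 0 := by linear_combination h
    rcases mul_eq_zero.mp h' with h' | h'
    · exact ht1 (by linarith)
    · exact ht2 (by linarith)
  suffices H : ∀ E : ℕ → ℕ,
      (∀ i, E i = max (α - i) (i - (α + m1)) +
        max ((α + m1 + m2) - i) (i - (α + m1 + m2 + m3))) →
      ∑ i ∈ Finset.range (α + m1 + m2 + m3 + m4 + 1), t ^ (E i) * dcoef k t (p + 2 * i)
      = t ^ m2 * (((m2 : ℝ) + 1) / (1 - t) + 2 * t / (1 - t) ^ 2) +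
        (t ^ (p + 2 * α + m1 + m2) + t ^ (m1 + m2) + t ^ (m2 + m3 + 2 * m4 + extra) +
            t ^ (m2 + m3)) / ((1 - t⁻¹) * (1 - t ^ 2)) by
    exact H _ fun i => rfl
  intro E hE
  have step1 : ∀ i ∈ Finset.range (α + m1 + m2 + m3 + m4 + 1),
      t ^ (E i) * dcoef k t (p + 2 * i)
        = t ^ (E i) * (1 / (1 - t))
          + ((if i = 0 then (if p = 0 then t ^ (E i) * (1 / (1 - t ^ 2) - 1 / (1 - t)) else 0) else 0)
             + (if i = α + m1 + m2 + m3 + m4 then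
                 (if extra = 0 then t ^ (E i) * (1 / (1 - t ^ 2) - 1 / (1 - t)) else 0) else 0)) := by
    intro i hi
    have hi' := Finset.mem_range.mp hi
    unfold dcoef
    split_ifs <;> first | (exfalso; omega) | ring
  rw [Finset.sum_congr rfl step1, Finset.sum_add_distrib, Finset.sum_add_distrib,
    Finset.sum_ite_eq' (Finset.range (α + m1 + m2 + m3 + m4 + 1)) 0,
    Finset.sum_ite_eq' (Finset.range (α + m1 + m2 + m3 + m4 + 1)) (α + m1 + m2 + m3 + m4),
    if_pos (Finset.mem_range.mpr (by omega)), if_pos (Finset.mem_range.mpr (by omega)),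
    ← Finset.sum_mul]
  have hE0 : E 0 = α + (α + m1 + m2) := by rw [hE]; omega
  have hEN : E (α + m1 + m2 + m3 + m4) = (m2 + m3 + m4) + m4 := by rw [hE]; omega
  rw [hE0, hEN]
  have c1 : ∑ i ∈ Finset.Ico 0 α, t ^ (E i)
      = t ^ (m1 + m2 + 2) * (((t ^ 2) ^ α - 1) / (t ^ 2 - 1)) := by
    rw [show Finset.Ico 0 α = Finset.range α from by rw [Finset.range_eq_Ico],
      ← Finset.sum_range_reflect]
    rw [Finset.sum_congr rfl fun j hj => show t ^ (E (α - 1 - j)) = t ^ ((m1 + m2 + 2) + 2 * j) from by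
      have := Finset.mem_range.mp hj; rw [hE]; congr 1; omega, geom2 t h2]
  have c2 : ∑ i ∈ Finset.Ico α (α + m1), t ^ (E i)
      = t ^ (m2 + 1) * ((t ^ m1 - 1) / (t - 1)) := by
    rw [Finset.sum_Ico_eq_sum_range, Nat.add_sub_cancel_left, ← Finset.sum_range_reflect]
    rw [Finset.sum_congr rfl fun j hj => show t ^ (E (α + (m1 - 1 - j))) = t ^ ((m2 + 1) + j) from by
      have := Finset.mem_range.mp hj; rw [hE]; congr 1; omega, geom1 t ht1]
  have c3 : ∑ i ∈ Finset.Ico (α + m1) (α + m1 + m2 + 1), t ^ (E i)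
      = ((m2 : ℝ) + 1) * t ^ m2 := by
    rw [Finset.sum_Ico_eq_sum_range, show α + m1 + m2 + 1 - (α + m1) = m2 + 1 from by omega]
    rw [Finset.sum_congr rfl fun j hj => show t ^ (E (α + m1 + j)) = t ^ m2 from by
      have := Finset.mem_range.mp hj; rw [hE]; congr 1; omega]
    rw [Finset.sum_const, Finset.card_range, nsmul_eq_mul]
    push_cast; ring
  have c4 : ∑ i ∈ Finset.Ico (α + m1 + m2 + 1) (α + m1 + m2 + m3 + 1), t ^ (E i)
      = t ^ (m2 + 1) * ((t ^ m3 - 1) / (t - 1)) := by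
    rw [Finset.sum_Ico_eq_sum_range,
      show α + m1 + m2 + m3 + 1 - (α + m1 + m2 + 1) = m3 from by omega]
    rw [Finset.sum_congr rfl fun j hj =>
      show t ^ (E (α + m1 + m2 + 1 + j)) = t ^ ((m2 + 1) + j) from by
        have := Finset.mem_range.mp hj; rw [hE]; congr 1; omega, geom1 t ht1]
  have c5 : ∑ i ∈ Finset.Ico (α + m1 + m2 + m3 + 1) (α + m1 + m2 + m3 + m4 + 1), t ^ (E i)
      = t ^ (m2 + m3 + 2) * (((t ^ 2) ^ m4 - 1) / (t ^ 2 - 1)) := by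
    rw [Finset.sum_Ico_eq_sum_range,
      show α + m1 + m2 + m3 + m4 + 1 - (α + m1 + m2 + m3 + 1) = m4 from by omega]
    rw [Finset.sum_congr rfl fun j hj =>
      show t ^ (E (α + m1 + m2 + m3 + 1 + j)) = t ^ ((m2 + m3 + 2) + 2 * j) from by
        have := Finset.mem_range.mp hj; rw [hE]; congr 1; omega, geom2 t h2]
  have hM : ∑ i ∈ Finset.range (α + m1 + m2 + m3 + m4 + 1), t ^ (E i)
      = t ^ (m1 + m2 + 2) * (((t ^ 2) ^ α - 1) / (t ^ 2 - 1))
        + t ^ (m2 + 1) * ((t ^ m1 - 1) / (t - 1))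
        + ((m2 : ℝ) + 1) * t ^ m2
        + t ^ (m2 + 1) * ((t ^ m3 - 1) / (t - 1))
        + t ^ (m2 + m3 + 2) * (((t ^ 2) ^ m4 - 1) / (t ^ 2 - 1)) := by
    rw [Finset.range_eq_Ico,
      ← Finset.sum_Ico_consecutive _ (Nat.zero_le α)
        (by omega : α ≤ α + m1 + m2 + m3 + m4 + 1),
      ← Finset.sum_Ico_consecutive _ (by omega : α ≤ α + m1)
        (by omega : α + m1 ≤ α + m1 + m2 + m3 + m4 + 1),
      ← Finset.sum_Ico_consecutive _ (by omega : α + m1 ≤ α + m1 + m2 + 1)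
        (by omega : α + m1 + m2 + 1 ≤ α + m1 + m2 + m3 + m4 + 1),
      ← Finset.sum_Ico_consecutive _ (by omega : α + m1 + m2 + 1 ≤ α + m1 + m2 + m3 + 1)
        (by omega : α + m1 + m2 + m3 + 1 ≤ α + m1 + m2 + m3 + m4 + 1),
      c1, c2, c3, c4, c5]
    ring
  rw [hM]
  have hne1 : (1 : ℝ) - t ≠ 0 := sub_ne_zero.mpr (Ne.symm ht1)
  have hne1' : t - 1 ≠ 0 := sub_ne_zero.mpr ht1
  have hne2 : (1 : ℝ) - t ^ 2 ≠ 0 := sub_ne_zero.mpr (Ne.symm h2)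
  have hne2' : t ^ 2 - 1 ≠ 0 := sub_ne_zero.mpr h2
  have hne3 : (1 : ℝ) - t⁻¹ ≠ 0 := sub_ne_zero.mpr fun h => ht1 (inv_eq_one.mp h.symm)
  interval_cases p <;> interval_cases extra <;> norm_num <;> field_simp <;> ring

set_option maxHeartbeats 1000000 in
private lemma term_eq (k : ℕ) (t : ℝ) (l1 l2 l3 l4 d1 d2 d3 d4 A B C D ν : ℕ)
    (h1 : l1 ≤ k) (h2 : l2 ≤ k) (h3 : l3 ≤ k) (h4 : l4 ≤ k)
    (hd1 : d1 = ((l1 : ℤ) - l2).natAbs) (hd2 : d2 = min (l1 + l2) (2 * k - l1 - l2))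
    (hd3 : d3 = ((l3 : ℤ) - l4).natAbs) (hd4 : d4 = min (l3 + l4) (2 * k - l3 - l4))
    (hA : A = min d1 d3) (hC : C = max d1 d3) (hB : B = min d2 d4) (hD : D = max d2 d4)
    (hBC : B ≤ C) (hpar : (l1 + l2) % 2 = (l3 + l4) % 2) :
    fus k t l1 l2 ν * fus k t l3 l4 ν * dcoef k t ν
      = (if ν % 2 = (l1 + l2) % 2 then
          t ^ (max (A - ν) (ν - B) / 2 + max (C - ν) (ν - D) / 2) * dcoef k t ν else 0) := by
  have hq1 : d1 % 2 = (l1 + l2) % 2 := by clear * - hd1; omega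
  have hq2 : d2 % 2 = (l1 + l2) % 2 := by clear * - hd2 h1 h2; omega
  have hq3 : d3 % 2 = (l3 + l4) % 2 := by clear * - hd3; omega
  have hq4 : d4 % 2 = (l3 + l4) % 2 := by clear * - hd4 h3 h4; omega
  have h12 : d1 ≤ d2 := by clear * - hd1 hd2 h1 h2; omega
  have h34 : d3 ≤ d4 := by clear * - hd3 hd4 h3 h4; omega
  have hsort : min d2 d4 ≤ max d1 d3 := by clear * - hB hC hBC; omega
  have hPA : A % 2 = (l1 + l2) % 2 := by clear * - hA hq1 hq3 hpar; omega
  have hPB : B % 2 = (l1 + l2) % 2 := by clear * - hB hq2 hq4 hpar; omega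
  have hs' := sort_exp d1 d2 d3 d4 ν h12 h34 hsort
  rw [← hA, ← hB, ← hC, ← hD] at hs'
  rw [fus_eq k t l1 l2 ν d1 d2 h1 h2 hd1 hd2, fus_eq k t l3 l4 ν d3 d4 h3 h4 hd3 hd4]
  clear hd1 hd2 hd3 hd4 hA hB hC hD hsort h12 h34
  by_cases hpar2 : ν % 2 = (l1 + l2) % 2
  · rw [if_pos hpar2, if_neg (by clear * - hpar2; omega),
      if_neg (by clear * - hpar2 hpar; omega)]
    have he1 : max (d1 - ν) (ν - d2) % 2 = 0 := by clear * - hq1 hq2 hpar2; omega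
    have he2 : max (d3 - ν) (ν - d4) % 2 = 0 := by clear * - hq3 hq4 hpar2 hpar; omega
    have he3 : max (A - ν) (ν - B) % 2 = 0 := by clear * - hPA hPB hpar2; omega
    congr 1
    rw [← pow_add]
    congr 1
    exact half_add _ _ _ _ hs' he1 he2 he3
  · rw [if_neg hpar2, if_pos (by clear * - hpar2; omega),
      if_pos (by clear * - hpar2 hpar; omega)]
    ring

set_option maxHeartbeats 1000000 in
/-- Closed form of the four-punctured-sphere partition function
`d_{0,4} = ∑_ν f^{λ1λ2ν} f^{λ3λ4ν} d_ν` in the case `L3 ≤ L2` (empty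
parabolic moduli space):
`d_{0,4} = t^{(L2−L3)/2}·(((L2−L3)/2 + 1)/(1−t) + 2t/(1−t)²)
  + (t^{(L1+L2)/2} + t^{(L2−L1)/2} + t^{k−(L3+L4)/2} + t^{(L4−L3)/2})/((1−t⁻¹)(1−t²))`. -/
theorem four_point_function_L3_le_L2 (k : ℕ) (hk : 0 < k) (t : ℝ)
    (ht0 : t ≠ 0) (ht1 : t ≠ 1) (ht2 : t ≠ -1)
    (l1 l2 l3 l4 : ℕ) (h1 : l1 ≤ k) (h2 : l2 ≤ k) (h3 : l3 ≤ k) (h4 : l4 ≤ k)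
    (hpar : (l1 + l2) % 2 = (l3 + l4) % 2)
    (δ1 δ2 δ3 δ4 L1 L2 L3 L4 : ℕ)
    (hδ1 : δ1 = ((l1 : ℤ) - l2).natAbs)
    (hδ2 : δ2 = min (l1 + l2) (2 * k - l1 - l2))
    (hδ3 : δ3 = ((l3 : ℤ) - l4).natAbs)
    (hδ4 : δ4 = min (l3 + l4) (2 * k - l3 - l4))
    (hL1 : L1 = min δ1 δ3) (hL2 : L2 = max δ1 δ3)
    (hL3 : L3 = min δ2 δ4) (hL4 : L4 = max δ2 δ4)
    (hL : L3 ≤ L2) :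
    ∑ ν ∈ Finset.range (k + 1), fus k t l1 l2 ν * fus k t l3 l4 ν * dcoef k t ν =
      t ^ ((L2 - L3) / 2) *
          ((((L2 - L3) / 2 : ℕ) + 1 : ℝ) / (1 - t) + 2 * t / (1 - t) ^ 2) +
        (t ^ ((L1 + L2) / 2) + t ^ ((L2 - L1) / 2) + t ^ (k - (L3 + L4) / 2) +
            t ^ ((L4 - L3) / 2)) / ((1 - t⁻¹) * (1 - t ^ 2)) := by
  have hq1 : δ1 % 2 = (l1 + l2) % 2 := by clear * - hδ1; omega
  have hq2 : δ2 % 2 = (l1 + l2) % 2 := by clear * - hδ2 h1 h2; omega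
  have hq3 : δ3 % 2 = (l3 + l4) % 2 := by clear * - hδ3; omega
  have hq4 : δ4 % 2 = (l3 + l4) % 2 := by clear * - hδ4 h3 h4; omega
  have hd12 : δ1 ≤ δ2 := by clear * - hδ1 hδ2 h1 h2; omega
  have hd34 : δ3 ≤ δ4 := by clear * - hδ3 hδ4 h3 h4; omega
  have hd2k : δ2 ≤ k := by clear * - hδ2; omega
  have hd4k : δ4 ≤ k := by clear * - hδ4; omega
  have hAB : L1 ≤ L3 := by clear * - hL1 hL3 hd12 hd34; omega
  have hCD : L2 ≤ L4 := by clear * - hL2 hL4 hd12 hd34; omega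
  have hDk : L4 ≤ k := by clear * - hL4 hd2k hd4k; omega
  have hPA : L1 % 2 = (l1 + l2) % 2 := by clear * - hL1 hq1 hq3 hpar; omega
  have hPB : L3 % 2 = (l1 + l2) % 2 := by clear * - hL3 hq2 hq4 hpar; omega
  have hPC : L2 % 2 = (l1 + l2) % 2 := by clear * - hL2 hq1 hq3 hpar; omega
  have hPD : L4 % 2 = (l1 + l2) % 2 := by clear * - hL4 hq2 hq4 hpar; omega
  obtain ⟨α, m1, m2, m3, m4, extra, he, hA, hB, hC, hD, hkk⟩ :
      ∃ α m1 m2 m3 m4 extra, extra ≤ 1 ∧ L1 = (l1 + l2) % 2 + 2 * α ∧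
        L3 = (l1 + l2) % 2 + 2 * (α + m1) ∧ L2 = (l1 + l2) % 2 + 2 * (α + m1 + m2) ∧
        L4 = (l1 + l2) % 2 + 2 * (α + m1 + m2 + m3) ∧
        k = (l1 + l2) % 2 + 2 * (α + m1 + m2 + m3 + m4) + extra :=
    ⟨(L1 - (l1 + l2) % 2) / 2, (L3 - L1) / 2, (L2 - L3) / 2, (L4 - L2) / 2,
      (k - (l1 + l2) % 2) / 2 - (L4 - (l1 + l2) % 2) / 2, (k - (l1 + l2) % 2) % 2,
      by clear * -; omega,
      by clear * - hAB hL hCD hDk hPA hPB hPC hPD hk; omega,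
      by clear * - hAB hL hCD hDk hPA hPB hPC hPD hk; omega,
      by clear * - hAB hL hCD hDk hPA hPB hPC hPD hk; omega,
      by clear * - hAB hL hCD hDk hPA hPB hPC hPD hk; omega,
      by clear * - hAB hL hCD hDk hPA hPB hPC hPD hk; omega⟩
  have hterm : ∀ ν ∈ Finset.range (k + 1),
      fus k t l1 l2 ν * fus k t l3 l4 ν * dcoef k t ν
      = (if ν % 2 = (l1 + l2) % 2 then
          t ^ (max (L1 - ν) (ν - L3) / 2 + max (L2 - ν) (ν - L4) / 2) * dcoef k t ν
        else 0) :=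
    fun ν _ => term_eq k t l1 l2 l3 l4 δ1 δ2 δ3 δ4 L1 L3 L2 L4 ν h1 h2 h3 h4
      hδ1 hδ2 hδ3 hδ4 hL1 hL2 hL3 hL4 hL hpar
  rw [Finset.sum_congr rfl hterm,
    reindex ((l1 + l2) % 2) (α + m1 + m2 + m3 + m4) k (by clear * -; omega)
      (by clear * - hkk he; omega) (by clear * - hkk he; omega)
      (fun ν => if ν % 2 = (l1 + l2) % 2 then
          t ^ (max (L1 - ν) (ν - L3) / 2 + max (L2 - ν) (ν - L4) / 2) * dcoef k t ν
        else 0)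
      (fun ν h => if_neg (by clear * - h; omega))]
  have h6 : ∀ i ∈ Finset.range (α + m1 + m2 + m3 + m4 + 1),
      (if ((l1 + l2) % 2 + 2 * i) % 2 = (l1 + l2) % 2 then
          t ^ (max (L1 - ((l1 + l2) % 2 + 2 * i)) (((l1 + l2) % 2 + 2 * i) - L3) / 2
              + max (L2 - ((l1 + l2) % 2 + 2 * i)) (((l1 + l2) % 2 + 2 * i) - L4) / 2)
            * dcoef k t ((l1 + l2) % 2 + 2 * i)
        else 0)
      = t ^ (max (α - i) (i - (α + m1)) + max ((α + m1 + m2) - i) (i - (α + m1 + m2 + m3)))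
          * dcoef k t ((l1 + l2) % 2 + 2 * i) := by
    intro i _
    rw [if_pos (by clear * -; omega),
      show max (L1 - ((l1 + l2) % 2 + 2 * i)) (((l1 + l2) % 2 + 2 * i) - L3) / 2
          + max (L2 - ((l1 + l2) % 2 + 2 * i)) (((l1 + l2) % 2 + 2 * i) - L4) / 2
        = max (α - i) (i - (α + m1)) + max ((α + m1 + m2) - i) (i - (α + m1 + m2 + m3)) from
        half_two _ _ _ _ (by clear * - hA hB; omega) (by clear * - hC hD; omega)]
  rw [Finset.sum_congr rfl h6,
    key t ht0 ht1 ht2 ((l1 + l2) % 2) α m1 m2 m3 m4 extra k (by clear * -; omega) he hkk hk,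
    show (L2 - L3) / 2 = m2 from by clear * - hB hC; omega,
    show (L1 + L2) / 2 = (l1 + l2) % 2 + 2 * α + m1 + m2 from by clear * - hA hC; omega,
    show (L2 - L1) / 2 = m1 + m2 from by clear * - hA hC; omega,
    show k - (L3 + L4) / 2 = m2 + m3 + 2 * m4 + extra from by clear * - hB hD hkk he; omega,
    show (L4 - L3) / 2 = m2 + m3 from by clear * - hB hD; omega]
end

section
/- Let k be a positive integer, t a real number with |t| < 1, and λ1, λ2 integers with 0 ≤ λ1, λ2 ≤ k. Then ∫_0^π ( sin((λ1+1)θ) − t·sin((λ1−1)θ) )·( sin((λ2+1)θ) − t·sin((λ2−1)θ) ) / (1 − 2t·cos(2θ) + t²) dθ equals (π/2)·(1+t) if λ1 = λ2 = 0, equals π/2 if λ1 = λ2 ≥ 1, and equals 0 if λ1 ≠ λ2, where λi−1 is interpreted as an integer (so sin((λi−1)θ) = −sin θ when λi = 0). (This is the first orthogonality relation of the SU(2) deformed characters Θ_λ with respect to the t-deformed Weyl measure, i.e. the Hall–Littlewood orthogonality underlying the semi-stable contribution (d_λ^{ss})^{−1} = (1−t)·∑_{w∈W_λ} t^{ℓ(w)}.)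 -/
/-!
With `w = exp (2iθ)` the weight is `1 - 2t cos 2θ + t² = |1 - t w|²`, so the second factor divided
by it is the imaginary part of `exp (i(λ₂+1)θ) / (1 - t w)`, i.e. the geometric series
`∑ tʲ sin ((λ₂+1+2j)θ)`. Integrating termwise against the first factor, orthogonality of the sines
on `[0, π]` leaves `tʲ [λ₁ = λ₂+2j] - tʲ⁺¹ [λ₁ = λ₂+2j+2]` from the `j`-th term, plus `t` from
`sin (-θ) sin θ` when `λ₁ = λ₂ = j = 0`; the series telescopes to `[λ₁ = λ₂]`.
-/

open Real

theorem Summable.hasSum_sub_succ {G : Type*} [AddCommGroup G] [TopologicalSpace G]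
    [IsTopologicalAddGroup G] {f : ℕ → G} (hf : Summable f) : HasSum (fun n => f n - f (n + 1)) (f 0) := by
  simpa using hf.hasSum.sub ((hasSum_nat_add_iff' 1).mpr hf.hasSum)

theorem hasSum_pow_mul_sin_add_mul {t : ℝ} (ht : |t| < 1) (α β : ℝ) :
    HasSum (fun j : ℕ => t ^ j * sin (α + j * β))
      ((sin α - t * sin (α - β)) / (1 - 2 * t * cos β + t ^ 2)) := by
  have hq : ‖(t : ℂ) * Complex.exp (β * Complex.I)‖ < 1 := by
    rwa [norm_mul, Complex.norm_exp_ofReal_mul_I, Complex.norm_real, mul_one]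
  have h := ((hasSum_geometric_of_norm_lt_one hq).mul_left
    (Complex.exp (α * Complex.I))).mapL Complex.imCLM
  convert h using 1
  · ext j
    rw [mul_pow, ← Complex.exp_nat_mul, mul_left_comm, ← Complex.exp_add, ← Complex.ofReal_pow,
      show (α : ℂ) * Complex.I + j * (β * Complex.I) = ((α + j * β : ℝ) : ℂ) * Complex.I by
        push_cast; ring,
      Complex.imCLM_apply, Complex.im_ofReal_mul, Complex.exp_ofReal_mul_I_im]
  · rw [Complex.imCLM_apply, ← div_eq_mul_inv, Complex.div_im, Complex.normSq_apply]
    simp only [Complex.exp_ofReal_mul_I_re, Complex.exp_ofReal_mul_I_im, Complex.sub_re,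
      Complex.sub_im, Complex.one_re, Complex.one_im, Complex.re_ofReal_mul, Complex.im_ofReal_mul]
    have hD : (1 - t * cos β) * (1 - t * cos β) + (0 - t * sin β) * (0 - t * sin β) =
        1 - 2 * t * cos β + t ^ 2 := by
      linear_combination t ^ 2 * sin_sq_add_cos_sq β
    rw [hD, sin_sub]
    ring

theorem integral_cos_int_mul (c : ℤ) :
    ∫ θ in (0 : ℝ)..π, cos (c * θ) = if c = 0 then π else 0 := by
  split_ifs with hc
  · simp [hc]
  · rw [intervalIntegral.integral_comp_mul_left (fun x => cos x) (Int.cast_ne_zero.mpr hc)]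
    simp [sin_int_mul_pi]

theorem integral_sin_int_mul_mul_sin_int_mul (a b : ℤ) :
    ∫ θ in (0 : ℝ)..π, sin (a * θ) * sin (b * θ) =
      π / 2 * ((if a = b then 1 else 0) - if a = -b then 1 else 0) := by
  have h (θ : ℝ) : sin (a * θ) * sin (b * θ) =
      (cos (((a - b : ℤ) : ℝ) * θ) - cos (((a + b : ℤ) : ℝ) * θ)) / 2 := by
    push_cast
    rw [sub_mul, add_mul, cos_sub, cos_add]
    ring
  simp only [h]
  rw [intervalIntegral.integral_div, intervalIntegral.integral_sub
    ((by fun_prop : Continuous _).intervalIntegrable _ _)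
    ((by fun_prop : Continuous _).intervalIntegrable _ _),
    integral_cos_int_mul, integral_cos_int_mul]
  simp only [sub_eq_zero, add_eq_zero_iff_eq_neg]
  split_ifs <;> ring

theorem integral_deformed_sin_mul_sin (t : ℝ) (l n : ℕ) :
    ∫ θ in (0 : ℝ)..π, (sin ((l + 1) * θ) - t * sin ((((l : ℤ) - 1 : ℤ) : ℝ) * θ)) *
        sin ((n + 1) * θ) =
      π / 2 * ((if l = n then 1 else 0) - (if l = n + 2 then t else 0) +
        if l = 0 ∧ n = 0 then t else 0) := by
  have h (θ : ℝ) : (sin ((l + 1) * θ) - t * sin ((((l : ℤ) - 1 : ℤ) : ℝ) * θ)) *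
      sin ((n + 1) * θ) =
        sin ((((l : ℤ) + 1 : ℤ) : ℝ) * θ) * sin ((((n : ℤ) + 1 : ℤ) : ℝ) * θ) -
          t * (sin ((((l : ℤ) - 1 : ℤ) : ℝ) * θ) * sin ((((n : ℤ) + 1 : ℤ) : ℝ) * θ)) := by
    push_cast
    ring
  simp only [h]
  rw [intervalIntegral.integral_sub ((by fun_prop : Continuous _).intervalIntegrable _ _)
      ((by fun_prop : Continuous _).intervalIntegrable _ _),
    intervalIntegral.integral_const_mul, integral_sin_int_mul_mul_sin_int_mul,
    integral_sin_int_mul_mul_sin_int_mul]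
  split_ifs <;> first | ring1 | omega

theorem hasSum_integral_mul_pow_mul_sin {f : ℝ → ℝ} (hf : Continuous f) {t : ℝ} (ht : |t| < 1)
    (a b x y : ℝ) :
    HasSum (fun j : ℕ => ∫ θ in x..y, f θ * (t ^ j * sin ((a + j * b) * θ)))
      (∫ θ in x..y, f θ *
        ((sin (a * θ) - t * sin ((a - b) * θ)) / (1 - 2 * t * cos (b * θ) + t ^ 2))) := by
  have hgeom : Summable fun j : ℕ => |t| ^ j := summable_geometric_of_lt_one (abs_nonneg t) ht
  refine intervalIntegral.hasSum_integral_of_dominated_convergence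
    (fun j θ => |f θ| * |t| ^ j) (fun j => (by fun_prop : Continuous _).aestronglyMeasurable)
    (fun j => Filter.Eventually.of_forall fun θ _ => ?_)
    (Filter.Eventually.of_forall fun θ _ => hgeom.mul_left _) ?_
    (Filter.Eventually.of_forall fun θ _ => ?_)
  · rw [norm_mul, norm_mul, norm_pow, Real.norm_eq_abs, Real.norm_eq_abs]
    gcongr
    exact mul_le_of_le_one_right (by positivity) (abs_sin_le_one _)
  · simp_rw [tsum_mul_left, tsum_geometric_of_lt_one (abs_nonneg t) ht]
    exact (by fun_prop : Continuous _).intervalIntegrable _ _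
  · simpa only [add_mul, sub_mul, mul_assoc] using
      (hasSum_pow_mul_sin_add_mul ht (a * θ) (b * θ)).mul_left (f θ)

theorem deformed_character_orthogonality_general (t : ℝ) (ht : |t| < 1)
    (l1 l2 : ℕ) :
    (∫ θ in (0 : ℝ)..Real.pi,
      ((Real.sin (((l1 : ℝ) + 1) * θ) -
          t * Real.sin ((((l1 : ℤ) - 1 : ℤ) : ℝ) * θ)) *
        (Real.sin (((l2 : ℝ) + 1) * θ) -
          t * Real.sin ((((l2 : ℤ) - 1 : ℤ) : ℝ) * θ))) /
        (1 - 2 * t * Real.cos (2 * θ) + t ^ 2)) =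
      if l1 = l2 then (if l1 = 0 then Real.pi / 2 * (1 + t) else Real.pi / 2)
      else 0 := by
  set P : ℝ → ℝ := fun θ => sin ((l1 + 1) * θ) - t * sin ((((l1 : ℤ) - 1 : ℤ) : ℝ) * θ)
  set a : ℕ → ℝ := fun j => if l1 = l2 + 2 * j then t ^ j else 0
  set c : ℝ := if l1 = 0 ∧ l2 = 0 then t else 0
  have hterm (j : ℕ) : ∫ θ in (0 : ℝ)..π, P θ * (t ^ j * sin ((l2 + 1 + j * 2) * θ)) =
      π / 2 * (a j - a (j + 1) + if j = 0 then c else 0) := by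
    have hfreq : (l2 : ℝ) + 1 + j * 2 = ((l2 + 2 * j : ℕ) : ℝ) + 1 := by push_cast; ring
    simp_rw [hfreq, mul_left_comm (P _)]
    rw [intervalIntegral.integral_const_mul, integral_deformed_sin_mul_sin]
    simp only [a, c]
    split_ifs <;> first | ring1 | omega | (subst_vars; ring1)
  have ha : Summable a := summable_of_ne_finset_zero (s := Finset.range (l1 + 1))
    fun j hj => if_neg (by rw [Finset.mem_range] at hj; omega)
  have hseries := hasSum_integral_mul_pow_mul_sin (f := P) (by fun_prop) ht (l2 + 1) 2 0 π
  simp_rw [hterm] at hseries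
  calc _ = ∫ θ in (0 : ℝ)..π, P θ * ((sin ((l2 + 1) * θ) - t * sin ((l2 + 1 - 2) * θ)) /
        (1 - 2 * t * cos (2 * θ) + t ^ 2)) := by
        congr! 2 with θ
        rw [mul_div_assoc, show (((l2 : ℤ) - 1 : ℤ) : ℝ) = l2 + 1 - 2 by push_cast; ring]
    _ = π / 2 * (a 0 + c) :=
        hseries.unique ((ha.hasSum_sub_succ.add (hasSum_ite_eq 0 c)).mul_left (π / 2))
    _ = _ := by
        simp only [a, c]
        split_ifs <;> first | ring1 | omega

/-- First orthogonality relation of the SU(2) deformed characters with respect to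
the `t`-deformed Weyl measure (Hall–Littlewood orthogonality): for `|t| < 1` and
`0 ≤ λ1, λ2 ≤ k`,
`∫_0^π (sin((λ1+1)θ) − t sin((λ1−1)θ))(sin((λ2+1)θ) − t sin((λ2−1)θ))
  / (1 − 2t cos(2θ) + t²) dθ`
equals `(π/2)(1+t)` if `λ1 = λ2 = 0`, `π/2` if `λ1 = λ2 ≥ 1`, and `0` otherwise,
where `λi − 1` is interpreted as an integer. -/
theorem deformed_character_orthogonality (k : ℕ) (hk : 0 < k) (t : ℝ) (ht : |t| < 1)
    (l1 l2 : ℕ) (h1 : l1 ≤ k) (h2 : l2 ≤ k) :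
    (∫ θ in (0 : ℝ)..Real.pi,
      ((Real.sin (((l1 : ℝ) + 1) * θ) -
          t * Real.sin ((((l1 : ℤ) - 1 : ℤ) : ℝ) * θ)) *
        (Real.sin (((l2 : ℝ) + 1) * θ) -
          t * Real.sin ((((l2 : ℤ) - 1 : ℤ) : ℝ) * θ))) /
        (1 - 2 * t * Real.cos (2 * θ) + t ^ 2)) =
      if l1 = l2 then (if l1 = 0 then Real.pi / 2 * (1 + t) else Real.pi / 2)
      else 0 :=
  deformed_character_orthogonality_general t ht l1 l2
end

section
/- Let Λ be a finite type, * : Λ → Λ an involution (λ** = λ for all λ), F : Λ × Λ × Λ → ℂ a function invariant under all permutations of its three arguments, and D : Λ → ℂ with D(λ) ≠ 0 and D(λ*) = D(λ) for all λ. Assume the crossing relation: for all λ1, λ2, λ3, λ4 ∈ Λ, ∑_{ν∈Λ} F(λ1,λ2,ν*)·D(ν)·F(ν,λ3,λ4) = ∑_{ν∈Λ} F(λ1,λ3,ν*)·D(ν)·F(ν,λ2,λ4). On the free ℂ-vector space with basis (e_λ)_{λ∈Λ}, define the bilinear product by e_λ ⋆ e_μ := ∑_{ν∈Λ} F(λ,μ,ν*)·D(ν)·e_ν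 and the symmetric bilinear pairing by ⟨e_λ, e_μ⟩ := (if μ = λ* then D(λ)^{−1} else 0). Then ⋆ is associative and compatible with the pairing: ⟨x ⋆ y, z⟩ = ⟨x, y ⋆ z⟩ for all vectors x, y, z. (This is the Frobenius-algebra structure of the complex Verlinde algebra, deduced from the TQFT gluing rules.) -/
/-- The complex Verlinde algebra is a Frobenius algebra. Let `Λ` be a finite type
with an involution `star`, `F : Λ × Λ × Λ → ℂ` invariant under all permutations of
its arguments (the three-holed-sphere amplitudes), and `D : Λ → ℂ` nonvanishing
with `D(λ*) = D(λ)` (the cylinder normalization), satisfying the crossing relation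
`∑_ν F(λ1,λ2,ν*) D(ν) F(ν,λ3,λ4) = ∑_ν F(λ1,λ3,ν*) D(ν) F(ν,λ2,λ4)`.
On the free ℂ-vector space on `Λ` define
`e_λ ⋆ e_μ := ∑_ν F(λ,μ,ν*) D(ν) e_ν` (extended bilinearly) and
`⟨e_λ, e_μ⟩ := if μ = λ* then D(λ)⁻¹ else 0`. Then `⋆` is associative and
`⟨x ⋆ y, z⟩ = ⟨x, y ⋆ z⟩`. -/
theorem verlinde_frobenius {Λ : Type*} [Fintype Λ] [DecidableEq Λ]
    (star : Λ → Λ) (hstar : ∀ l, star (star l) = l)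
    (F : Λ → Λ → Λ → ℂ)
    (hF12 : ∀ a b c, F a b c = F b a c) (hF23 : ∀ a b c, F a b c = F a c b)
    (D : Λ → ℂ) (hD : ∀ l, D l ≠ 0) (hDstar : ∀ l, D (star l) = D l)
    (hcross : ∀ l1 l2 l3 l4 : Λ,
      ∑ ν : Λ, F l1 l2 (star ν) * D ν * F ν l3 l4 =
        ∑ ν : Λ, F l1 l3 (star ν) * D ν * F ν l2 l4)
    (mul : (Λ → ℂ) → (Λ → ℂ) → (Λ → ℂ))
    (hmul : ∀ x y ν, mul x y ν = ∑ l : Λ, ∑ m : Λ, x l * y m * (F l m (star ν) * D ν))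
    (pair : (Λ → ℂ) → (Λ → ℂ) → ℂ)
    (hpair : ∀ x y, pair x y =
      ∑ l : Λ, ∑ m : Λ, x l * y m * (if m = star l then (D l)⁻¹ else 0)) :
    (∀ x y z : Λ → ℂ, mul (mul x y) z = mul x (mul y z)) ∧
      (∀ x y z : Λ → ℂ, pair (mul x y) z = pair x (mul y z)) := by
  -- key scalar crossing identity
  have key : ∀ a b c d : Λ,
      ∑ l : Λ, F a b (star l) * D l * F l c d =
        ∑ l : Λ, F b c (star l) * D l * F a l d := by
    intro a b c d
    have h := hcross b c a d
    calc ∑ l : Λ, F a b (star l) * D l * F l c d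
        = ∑ l : Λ, F b a (star l) * D l * F l c d := by
          refine Finset.sum_congr rfl fun l _ => by rw [hF12 a b]
      _ = ∑ l : Λ, F b c (star l) * D l * F l a d := h.symm
      _ = ∑ l : Λ, F b c (star l) * D l * F a l d := by
          refine Finset.sum_congr rfl fun l _ => by rw [hF12 l a]
  have main : ∀ (a b c ν : Λ),
      ∑ l : Λ, F a b (star l) * D l * (F l c (star ν) * D ν) =
        ∑ l : Λ, F b c (star l) * D l * (F a l (star ν) * D ν) := by
    intro a b c ν
    have h := key a b c (star ν)
    calc ∑ l : Λ, F a b (star l) * D l * (F l c (star ν) * D ν)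
        = (∑ l : Λ, F a b (star l) * D l * F l c (star ν)) * D ν := by
          rw [Finset.sum_mul]; exact Finset.sum_congr rfl fun l _ => by ring
      _ = (∑ l : Λ, F b c (star l) * D l * F a l (star ν)) * D ν := by rw [h]
      _ = ∑ l : Λ, F b c (star l) * D l * (F a l (star ν) * D ν) := by
          rw [Finset.sum_mul]; exact Finset.sum_congr rfl fun l _ => by ring
  constructor
  · intro x y z
    funext ν
    rw [hmul, hmul]
    calc ∑ l : Λ, ∑ m : Λ, mul x y l * z m * (F l m (star ν) * D ν)
        -- expand and reorder to (c, a, b, l)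
        = ∑ c : Λ, ∑ a : Λ, ∑ b : Λ, x a * y b * z c *
            ∑ l : Λ, F a b (star l) * D l * (F l c (star ν) * D ν) := by
          simp only [hmul, Finset.sum_mul]
          -- order (l, c, a, b)
          rw [Finset.sum_comm]   -- (c, l, a, b)
          refine Finset.sum_congr rfl fun c _ => ?_
          rw [Finset.sum_comm]   -- (c, a, l, b)
          refine Finset.sum_congr rfl fun a _ => ?_
          rw [Finset.sum_comm]   -- (c, a, b, l)
          refine Finset.sum_congr rfl fun b _ => ?_
          rw [Finset.mul_sum]
          exact Finset.sum_congr rfl fun l _ => by ring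
      -- apply the crossing relation in the inner sum
      _ = ∑ c : Λ, ∑ a : Λ, ∑ b : Λ, x a * y b * z c *
            ∑ l : Λ, F b c (star l) * D l * (F a l (star ν) * D ν) := by
          refine Finset.sum_congr rfl fun c _ => Finset.sum_congr rfl fun a _ =>
            Finset.sum_congr rfl fun b _ => by rw [main a b c ν]
      -- reorder outer sums to (a, b, c)
      _ = ∑ a : Λ, ∑ b : Λ, ∑ c : Λ, x a * y b * z c *
            ∑ l : Λ, F b c (star l) * D l * (F a l (star ν) * D ν) := by
          rw [Finset.sum_comm]
          refine Finset.sum_congr rfl fun a _ => ?_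
          rw [Finset.sum_comm]
      -- repackage as mul x (mul y z)
      _ = ∑ a : Λ, ∑ l : Λ, x a * mul y z l * (F a l (star ν) * D ν) := by
          refine Finset.sum_congr rfl fun a _ => ?_
          simp only [hmul, Finset.sum_mul, Finset.mul_sum]
          -- LHS order (b, c, l), RHS order (l, b, c)
          conv_lhs => enter [2, b]; rw [Finset.sum_comm]
          conv_lhs => rw [Finset.sum_comm]
          exact Finset.sum_congr rfl fun l _ => Finset.sum_congr rfl fun b _ =>
            Finset.sum_congr rfl fun c _ => by ring
  · -- simplify the pairing
    have hpair' : ∀ x y : Λ → ℂ, pair x y = ∑ l : Λ, x l * y (star l) * (D l)⁻¹ := by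
      intro x y
      rw [hpair]
      refine Finset.sum_congr rfl fun l _ => ?_
      rw [Finset.sum_eq_single (star l)]
      · simp
      · intro m _ hm; simp [hm]
      · intro h; exact absurd (Finset.mem_univ _) h
    intro x y z
    have hinv : Function.Involutive star := hstar
    calc pair (mul x y) z
        = ∑ l : Λ, ∑ a : Λ, ∑ b : Λ, x a * y b * F a b (star l) * z (star l) := by
          rw [hpair']
          refine Finset.sum_congr rfl fun l _ => ?_
          rw [hmul, Finset.sum_mul, Finset.sum_mul]
          refine Finset.sum_congr rfl fun a _ => ?_
          rw [Finset.sum_mul, Finset.sum_mul]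
          refine Finset.sum_congr rfl fun b _ => ?_
          field_simp [hD l]
      _ = ∑ l : Λ, ∑ a : Λ, ∑ b : Λ, x a * y b * F a b l * z l := by
          rw [← Equiv.sum_comp hinv.toPerm
            (fun l => ∑ a : Λ, ∑ b : Λ, x a * y b * F a b l * z l)]
          refine Finset.sum_congr rfl fun l _ => ?_
          simp [Function.Involutive.coe_toPerm]
      _ = ∑ a : Λ, x a * mul y z (star a) * (D a)⁻¹ := by
          rw [Finset.sum_comm]
          refine Finset.sum_congr rfl fun a _ => ?_
          rw [hmul, Finset.mul_sum, Finset.sum_mul]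
          rw [Finset.sum_comm]
          refine Finset.sum_congr rfl fun b _ => ?_
          rw [Finset.mul_sum, Finset.sum_mul]
          refine Finset.sum_congr rfl fun l _ => ?_
          rw [hstar a, hDstar a]
          have : F a b l = F b l a := by rw [hF12, hF23]
          rw [this]
          field_simp [hD a]
      _ = pair x (mul y z) := (hpair' x (mul y z)).symm
end

section
/- Let Λ and F be finite types, * : Λ → Λ an involution, Θ : Λ → F → ℂ, w : F → ℂ with w(f) ≠ 0 for all f, and D : Λ → ℂ. Assume the (second) orthogonality relation: for all f, f' ∈ F, ∑_{λ∈Λ} D(λ)·Θ(λ)(f)·Θ(λ*)(f')·w(f') = (1 if f = f', else 0). For an integer g and a finite list λ⃗ = (λ_1,…,λ_n) of elements of Λ, define Z_g(λ⃗) := ∑_{f∈F} w(f)^{1−g} · ∏_{i=1}^n Θ(λ_i)(f), where w(f)^{1−g} denotes the integer power of the nonzero complex number w(f). Then the TQFT gluing rules hold: (i) Z_{g+1}(λ⃗) = ∑_{λ∈Λ} Z_g(λ⃗, λ, λ*)·D(λ) for every g and λ⃗; and (ii) Z_{g1+g2}(λ⃗_1, λ⃗_2) = ∑_{λ∈Λ}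 Z_{g1}(λ⃗_1, λ)·Z_{g2}(λ⃗_2, λ*)·D(λ) for all g1, g2 and lists λ⃗_1, λ⃗_2. (These are the gluing formulas for the parabolic Hitchin characters d_{g,n}, deduced from the orthogonality of the deformed characters.) -/
/-- TQFT gluing rules for the parabolic Hitchin characters, deduced from the
(second) orthogonality of the deformed characters. Here `F` plays the role of
the set of regular Bethe solutions, `w` of the function `θ_t`, `Θ λ` of the
deformed character `Θ_{λ,t}`, `star` of weight conjugation, `D` of the cylinder
normalization `d_λ`, and `Z g λ⃗ = ∑_f w(f)^{1−g} ∏_i Θ(λ_i)(f)` of the partition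
function `d_{g,n}(λ⃗)`. Assuming
`∑_λ D(λ) Θ(λ)(f) Θ(λ*)(f') w(f') = δ_{f f'}`, one has the gluing rules
`Z_{g+1}(λ⃗) = ∑_λ Z_g(λ⃗, λ, λ*) D(λ)` and
`Z_{g1+g2}(λ⃗1, λ⃗2) = ∑_λ Z_{g1}(λ⃗1, λ) Z_{g2}(λ⃗2, λ*) D(λ)`. -/
theorem tqft_gluing {Λ F : Type*} [Fintype Λ] [Fintype F] [DecidableEq F]
    (star : Λ → Λ) (hstar : ∀ l, star (star l) = l)
    (Θ : Λ → F → ℂ) (w : F → ℂ) (hw : ∀ f, w f ≠ 0) (D : Λ → ℂ)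
    (horth : ∀ f f' : F,
      ∑ l : Λ, D l * Θ l f * Θ (star l) f' * w f' = if f = f' then 1 else 0)
    (Z : ℤ → List Λ → ℂ)
    (hZ : ∀ (g : ℤ) (ls : List Λ),
      Z g ls = ∑ f : F, w f ^ (1 - g) * (ls.map fun a => Θ a f).prod) :
    (∀ (g : ℤ) (ls : List Λ),
        Z (g + 1) ls = ∑ l : Λ, Z g (ls ++ [l, star l]) * D l) ∧
      (∀ (g1 g2 : ℤ) (ls1 ls2 : List Λ),
        Z (g1 + g2) (ls1 ++ ls2) =
          ∑ l : Λ, Z g1 (ls1 ++ [l]) * Z g2 (ls2 ++ [star l]) * D l) := by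
  have key : ∀ f f' : F, ∑ l : Λ, D l * Θ l f * Θ (star l) f' =
      if f = f' then (w f')⁻¹ else 0 := by
    intro f f'
    have h : (∑ l : Λ, D l * Θ l f * Θ (star l) f') * w f'
        = if f = f' then 1 else 0 := by
      rw [Finset.sum_mul]; exact horth f f'
    rw [← eq_div_iff (hw f')] at h
    rw [h]
    split <;> simp [one_div]
  constructor
  · intro g ls
    have step : ∀ l : Λ,
        Z g (ls ++ [l, star l]) * D l
          = ∑ f : F, (w f ^ (1 - g) * (ls.map fun a => Θ a f).prod)
              * (D l * Θ l f * Θ (star l) f) := by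
      intro l
      rw [hZ, Finset.sum_mul]
      refine Finset.sum_congr rfl fun f _ => ?_
      simp [List.prod_append]
      ring
    rw [Finset.sum_congr rfl fun l _ => step l, Finset.sum_comm, hZ]
    refine Finset.sum_congr rfl fun f _ => ?_
    rw [← Finset.mul_sum, key f f, if_pos rfl]
    have h1 : (1 : ℤ) - (g + 1) = (1 - g) - 1 := by ring
    rw [h1, zpow_sub_one₀ (hw f)]
    ring
  · intro g1 g2 ls1 ls2
    have step : ∀ l : Λ,
        Z g1 (ls1 ++ [l]) * Z g2 (ls2 ++ [star l]) * D l
          = ∑ f : F, ∑ f' : F,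
              (w f ^ (1 - g1) * (ls1.map fun a => Θ a f).prod)
              * (w f' ^ (1 - g2) * (ls2.map fun a => Θ a f').prod)
              * (D l * Θ l f * Θ (star l) f') := by
      intro l
      rw [hZ, hZ, Finset.sum_mul, Finset.sum_mul]
      refine Finset.sum_congr rfl fun f _ => ?_
      rw [Finset.mul_sum, Finset.sum_mul]
      refine Finset.sum_congr rfl fun f' _ => ?_
      simp [List.prod_append]
      ring
    rw [Finset.sum_congr rfl fun l _ => step l, Finset.sum_comm, hZ]
    refine Finset.sum_congr rfl fun f _ => ?_
    rw [Finset.sum_comm]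
    have inner : ∀ f' : F,
        ∑ l : Λ, (w f ^ (1 - g1) * (ls1.map fun a => Θ a f).prod)
            * (w f' ^ (1 - g2) * (ls2.map fun a => Θ a f').prod)
            * (D l * Θ l f * Θ (star l) f')
          = if f = f' then
              (w f ^ (1 - g1) * (ls1.map fun a => Θ a f).prod)
              * (w f' ^ (1 - g2) * (ls2.map fun a => Θ a f').prod) * (w f')⁻¹
            else 0 := by
      intro f'
      rw [← Finset.mul_sum, key f f']
      split <;> simp
    rw [Finset.sum_congr rfl fun f' _ => inner f', Finset.sum_ite_eq Finset.univ f, if_pos (Finset.mem_univ f)]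
    have h1 : (1 : ℤ) - (g1 + g2) = (1 - g1) + ((1 - g2) - 1) := by ring
    rw [h1, zpow_add₀ (hw f), zpow_sub_one₀ (hw f)]
    simp [List.prod_append]
    ring
end
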